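/- arXiv:1512.06193 — 7 statements merged into one kernel-verified Lean document; each statement's English description precedes it below -/
import Mathlib

section
/- There are exactly 2^n equivalence classes of Ulrich partitions of type (1,n,1), for any n ≥ 1. Concretely, equivalence classes of Ulrich partitions of type (1,n,1) are in bijection with subsets of {1,...,n}. -/
/-- A list of integers is strictly decreasing. -/
def StrictDec (l : List ℤ) : Prop := l.Chain' (· > ·)

/-- Time evolution of a three-block partition `(A | B | C)`: subtract `t` from each entry of
the first block, keep the middle block fixed, add `t` to each entry of the last block. -/
def evolve3 (A B C : List ℤ) (t : ℤ) : List ℤ := A.map (· - t) ++ B ++ C.map (· + t)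

/-- A list has exactly one repeated entry: the number of distinct values is one less
than the length. -/
def OneRepeat (l : List ℤ) : Prop := l.toFinset.card + 1 = l.length

/-- The dimension of a three-block partition of type `(α, β, γ)` is `αβ + αγ + βγ`. -/
def dim3 (A B C : List ℤ) : ℕ := A.length * B.length + A.length * C.length + B.length * C.length

/-- A three-block partition is Ulrich: it is a strictly decreasing sequence (with nonempty
outer blocks), and for every time `t ∈ {1, ..., N}` (N the dimension) the evolved list `P(t)`
has exactly one repeated entry. -/
def IsUlrich3 (A B C : List ℤ) : Prop :=
  A ≠ [] ∧ C ≠ [] ∧ StrictDec (evolve3 A B C 0) ∧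
    ∀ t : ℕ, 1 ≤ t → t ≤ dim3 A B C → OneRepeat (evolve3 A B C (t : ℤ))
/-- An Ulrich partition of type `(1, n, 1)`. -/
structure UlrichP1 (n : ℕ) where
  a : ℤ
  b : List ℤ
  c : ℤ
  len : b.length = n
  ulrich : IsUlrich3 [a] b [c]

/-- Two Ulrich partitions of type `(1,n,1)` are equivalent if they differ by adding a common
constant to all entries. -/
def shiftRel (n : ℕ) (P Q : UlrichP1 n) : Prop :=
  ∃ k : ℤ, Q.a = P.a + k ∧ Q.b = P.b.map (· + k) ∧ Q.c = P.c + k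

/-!
Since the middle block is strictly decreasing, `P(t)` has exactly one repeated entry iff exactly
one of three meetings happens at time `t`: `a - t` hits the middle block, `c + t` hits it, or
`a - t = c + t`. With `d = a - c` and `B = b - c`, these happen at the times `d - x` and `x` for
`x ∈ B`, and at `d / 2`. Covering the `2n + 1` times by at most `n + n + 1` meetings forces all
of them into `[1, 2n + 1]`, hence `d = 2n + 2`; then `B` avoids `n + 1` and contains exactly one
of `k`, `2n + 2 - k` for each `k ∈ [1, n]`. Conversely every such choice gives an Ulrich
partition, and `B` determines the partition up to shift.
-/

open Finset

def ExactlyOne (p q r : Prop) : Prop := (p ∧ ¬q ∧ ¬r) ∨ (¬p ∧ q ∧ ¬r) ∨ (¬p ∧ ¬q ∧ r)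

theorem Finset.card_insert_insert_eq_add_one_iff {α : Type*} [DecidableEq α] (s : Finset α)
    (x y : α) : #(insert x (insert y s)) = #s + 1 ↔ ExactlyOne (x ∈ s) (y ∈ s) (x = y) := by
  by_cases hx : x ∈ s <;> by_cases hy : y ∈ s <;> by_cases hxy : x = y <;>
    simp_all [ExactlyOne, card_insert_of_notMem]

theorem mem_image_sub_right_iff {s : Finset ℤ} {c x : ℤ} : x ∈ s.image (· - c) ↔ c + x ∈ s := by
  simp only [mem_image]
  exact ⟨fun ⟨y, hy, hyx⟩ => by rwa [← hyx, add_sub_cancel], fun h => ⟨c + x, h, by ring⟩⟩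

theorem List.mem_map_add_right_iff {l : List ℤ} {k x : ℤ} : x ∈ l.map (· + k) ↔ x - k ∈ l := by
  simp only [List.mem_map]
  exact ⟨fun ⟨y, hy, hyx⟩ => by rwa [← hyx, add_sub_cancel_right], fun h => ⟨x - k, h, by ring⟩⟩

section Evolution

variable {a c : ℤ} {b : List ℤ}

theorem evolve3_singleton (t : ℤ) : evolve3 [a] b [c] t = (a - t) :: (b ++ [c + t]) := by
  simp [evolve3]

theorem strictDec_evolve3_singleton_iff :
    StrictDec (evolve3 [a] b [c] 0) ↔ b.SortedGT ∧ (∀ x ∈ b, c < x ∧ x < a) ∧ c < a := by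
  rw [StrictDec, evolve3_singleton, List.Chain', List.isChain_iff_pairwise,
    List.sortedGT_iff_pairwise]
  simp only [sub_zero, add_zero, List.pairwise_cons, List.pairwise_append, List.mem_append,
    List.mem_singleton, forall_eq]
  constructor
  · rintro ⟨ha, hb, -, hc⟩
    exact ⟨hb, fun x hx => ⟨hc x hx, ha x (Or.inl hx)⟩, ha c (Or.inr rfl)⟩
  · rintro ⟨hb, hbd, hca⟩
    refine ⟨?_, hb, by simp, fun x hx => (hbd x hx).1⟩
    rintro y (hy | rfl)
    exacts [(hbd y hy).2, hca]

theorem oneRepeat_evolve3_singleton_iff (hb : b.Nodup) (t : ℤ) :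
    OneRepeat (evolve3 [a] b [c] t) ↔ ExactlyOne (a - t ∈ b) (c + t ∈ b) (a - t = c + t) := by
  rw [OneRepeat, evolve3_singleton, ← List.mem_toFinset, ← List.mem_toFinset (a := c + t),
    ← card_insert_insert_eq_add_one_iff, List.toFinset_card_of_nodup hb]
  simp only [List.toFinset_cons, List.toFinset_append, List.toFinset_nil, List.length_cons,
    List.length_append, List.length_nil, insert_empty, union_singleton]
  omega

end Evolution

/-- `B` records the times at which the last entry `c + t` meets the middle block and `d = a - c`:
then `a - t` meets the middle block iff `d - t ∈ B`, and the outer entries meet iff `2 t = d`. -/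
def MeetsOnce (n : ℕ) (d : ℤ) (B : Finset ℤ) : Prop :=
  ∀ t ∈ Icc (1 : ℤ) (2 * n + 1), ExactlyOne (d - t ∈ B) (t ∈ B) (2 * t = d)

theorem forall_oneRepeat_evolve3_iff {a c : ℤ} {b : List ℤ} (hb : b.Nodup) :
    (∀ t : ℕ, 1 ≤ t → t ≤ dim3 [a] b [c] → OneRepeat (evolve3 [a] b [c] t)) ↔
      MeetsOnce b.length (a - c) (b.toFinset.image (· - c)) := by
  have hdim : dim3 [a] b [c] = 2 * b.length + 1 := by simp [dim3]; ring
  have hmeet (t : ℤ) : OneRepeat (evolve3 [a] b [c] t) ↔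
      ExactlyOne (a - c - t ∈ b.toFinset.image (· - c)) (t ∈ b.toFinset.image (· - c))
        (2 * t = a - c) := by
    rw [oneRepeat_evolve3_singleton_iff hb, mem_image_sub_right_iff, mem_image_sub_right_iff,
      List.mem_toFinset, List.mem_toFinset, show c + (a - c - t) = a - t by ring,
      show 2 * t = a - c ↔ a - t = c + t by omega]
  simp only [MeetsOnce, mem_Icc, hmeet, hdim]
  constructor
  · intro h t ⟨ht₁, ht₂⟩
    lift t to ℕ using by omega
    exact h t (by omega) (by omega)
  · intro h t ht₁ ht₂
    exact h t ⟨by omega, by omega⟩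

theorem isUlrich3_singleton_iff {a c : ℤ} {b : List ℤ} :
    IsUlrich3 [a] b [c] ↔ b.SortedGT ∧ (∀ x ∈ b, c < x ∧ x < a) ∧ c < a ∧
      MeetsOnce b.length (a - c) (b.toFinset.image (· - c)) := by
  rw [IsUlrich3, strictDec_evolve3_singleton_iff]
  simp only [ne_eq, List.cons_ne_nil, not_false_eq_true, true_and, and_assoc]
  refine and_congr_right fun hb => and_congr_right fun _ => and_congr_right fun _ => ?_
  exact forall_oneRepeat_evolve3_iff hb.nodup

namespace MeetsOnce

variable {n : ℕ} {d : ℤ} {B : Finset ℤ}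

theorem subset_Icc_and_sub_mem_Icc (h : MeetsOnce n d B) (hB : #B = n) :
    B ⊆ Icc 1 (2 * n + 1) ∧ ∀ x ∈ B, d - x ∈ Icc (1 : ℤ) (2 * n + 1) := by
  set I := Icc (1 : ℤ) (2 * n + 1)
  have hI : #I = 2 * n + 1 := by simp [I]; omega
  have hcover : I ⊆ I.filter (d - · ∈ B) ∪ I.filter (· ∈ B) ∪ I.filter (2 * · = d) := by
    intro t ht
    have := h t ht
    unfold ExactlyOne at this
    simp only [mem_union, mem_filter]
    tauto
  have hfirst : #(I.filter (d - · ∈ B)) ≤ n :=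
    hB ▸ card_le_card_of_injOn (d - ·) (fun t ht => (mem_filter.1 ht).2)
      sub_right_injective.injOn
  have hsecond : #(I.filter (· ∈ B)) ≤ n := hB ▸ card_le_card fun t ht => (mem_filter.1 ht).2
  have hmid : #(I.filter (2 * · = d)) ≤ 1 :=
    card_le_one.2 fun s hs t ht => by
      simp only [mem_filter] at hs ht
      omega
  have hsum := (card_le_card hcover).trans (card_union_le _ _)
  have hsum' := card_union_le (I.filter (d - · ∈ B)) (I.filter (· ∈ B))
  constructor
  · have : I.filter (· ∈ B) = B :=
      eq_of_subset_of_card_le (fun t ht => (mem_filter.1 ht).2) (by omega)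
    exact this ▸ filter_subset _ _
  · have : (I.filter (d - · ∈ B)).image (d - ·) = B :=
      eq_of_subset_of_card_le (fun t ht => by
        obtain ⟨s, hs, rfl⟩ := mem_image.1 ht
        exact (mem_filter.1 hs).2)
        (by rw [card_image_of_injective _ sub_right_injective]; omega)
    intro x hx
    rw [← this] at hx
    obtain ⟨t, ht, rfl⟩ := mem_image.1 hx
    simpa using (mem_filter.1 ht).1

theorem eq_two_mul_add_two (h : MeetsOnce n d B) (hB : #B = n) : d = 2 * n + 2 := by
  obtain ⟨hsub, hreflect⟩ := h.subset_Icc_and_sub_mem_Icc hB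
  have hmeet : ∀ t ∈ Icc (1 : ℤ) (2 * n + 1), d - t ∈ Icc (1 : ℤ) (2 * n + 1) ∨ 2 * t = d := by
    intro t ht
    rcases h t ht with ⟨hd, -, -⟩ | ⟨-, ht', -⟩ | ⟨-, -, hmid⟩
    exacts [Or.inl (hsub hd), Or.inl (by simpa using hreflect t ht'), Or.inr hmid]
  have hfirst := hmeet 1 (by simp)
  have hlast := hmeet (2 * n + 1) (by simp)
  simp only [mem_Icc] at hfirst hlast
  omega

variable {B' : Finset ℤ}

theorem subset_of_forall_mem_iff (h : MeetsOnce n (2 * n + 2) B)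
    (h' : MeetsOnce n (2 * n + 2) B') (hsub : B ⊆ Icc 1 (2 * n + 1))
    (hagree : ∀ t ∈ Icc (1 : ℤ) n, t ∈ B ↔ t ∈ B') : B ⊆ B' := by
  intro x hx
  have hx' := mem_Icc.1 (hsub hx)
  rcases lt_trichotomy x (n + 1) with hlow | rfl | hhigh
  · exact (hagree x (mem_Icc.2 ⟨hx'.1, by omega⟩)).1 hx
  · have := h (n + 1) (mem_Icc.2 ⟨by omega, by omega⟩)
    unfold ExactlyOne at this
    tauto
  · obtain ⟨k, rfl⟩ : ∃ k, x = 2 * n + 2 - k := ⟨2 * n + 2 - x, by ring⟩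
    have hk : 1 ≤ k ∧ k ≤ n := ⟨by omega, by omega⟩
    have hkB : k ∉ B := by
      have := h _ (hsub hx)
      rw [sub_sub_cancel] at this
      unfold ExactlyOne at this
      tauto
    have := h' k (mem_Icc.2 ⟨by omega, by omega⟩)
    rw [← hagree k (mem_Icc.2 hk), eq_false (by omega : 2 * k ≠ 2 * n + 2)] at this
    unfold ExactlyOne at this
    tauto

theorem eq_of_forall_mem_iff (h : MeetsOnce n (2 * n + 2) B) (h' : MeetsOnce n (2 * n + 2) B')
    (hsub : B ⊆ Icc 1 (2 * n + 1)) (hsub' : B' ⊆ Icc 1 (2 * n + 1))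
    (hagree : ∀ t ∈ Icc (1 : ℤ) n, t ∈ B ↔ t ∈ B') : B = B' :=
  (h.subset_of_forall_mem_iff h' hsub hagree).antisymm
    (h'.subset_of_forall_mem_iff h hsub' fun t ht => (hagree t ht).symm)

end MeetsOnce

section ReflectChoice

variable {n : ℕ}

theorem one_le_coe_and_coe_le (k : Icc 1 n) : 1 ≤ (k : ℤ) ∧ (k : ℤ) ≤ n := by
  have := mem_Icc.1 k.2
  omega

theorem exists_coe_eq {t : ℤ} (h₁ : 1 ≤ t) (h₂ : t ≤ n) : ∃ k : Icc 1 n, (k : ℤ) = t :=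
  ⟨⟨t.toNat, mem_Icc.2 ⟨by omega, by omega⟩⟩, by simp; omega⟩

def reflectChoice (n : ℕ) (S : Finset (Icc 1 n)) : Finset ℤ :=
  univ.image fun k : Icc 1 n => if k ∈ S then (k : ℤ) else 2 * n + 2 - k

variable {S : Finset (Icc 1 n)}

theorem mem_reflectChoice {x : ℤ} :
    x ∈ reflectChoice n S ↔ ∃ k : Icc 1 n, k ∈ S ∧ (k : ℤ) = x ∨ k ∉ S ∧ 2 * n + 2 - k = x := by
  simp only [reflectChoice, mem_image, mem_univ, true_and]
  refine exists_congr fun k => ?_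
  split_ifs with hk <;> simp [hk]

theorem coe_mem_reflectChoice_iff (k : Icc 1 n) : (k : ℤ) ∈ reflectChoice n S ↔ k ∈ S := by
  rw [mem_reflectChoice]
  constructor
  · rintro ⟨j, ⟨hj, hjk⟩ | ⟨-, hjk⟩⟩
    · rwa [← Subtype.ext (Nat.cast_injective hjk)]
    · have := one_le_coe_and_coe_le j
      have := one_le_coe_and_coe_le k
      omega
  · exact fun hk => ⟨k, Or.inl ⟨hk, rfl⟩⟩

theorem reflect_mem_reflectChoice_iff (k : Icc 1 n) :
    2 * n + 2 - (k : ℤ) ∈ reflectChoice n S ↔ k ∉ S := by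
  rw [mem_reflectChoice]
  constructor
  · rintro ⟨j, ⟨-, hjk⟩ | ⟨hj, hjk⟩⟩
    · have := one_le_coe_and_coe_le j
      have := one_le_coe_and_coe_le k
      omega
    · rwa [← Subtype.ext (Nat.cast_injective (by omega : (j : ℤ) = k))]
  · exact fun hk => ⟨k, Or.inr ⟨hk, rfl⟩⟩

theorem middle_notMem_reflectChoice : (n + 1 : ℤ) ∉ reflectChoice n S := by
  rw [mem_reflectChoice]
  rintro ⟨k, ⟨-, hk⟩ | ⟨-, hk⟩⟩ <;>
  · have := one_le_coe_and_coe_le k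
    omega

theorem reflectChoice_subset : reflectChoice n S ⊆ Icc 1 (2 * n + 1) := by
  intro x hx
  obtain ⟨k, ⟨-, rfl⟩ | ⟨-, rfl⟩⟩ := mem_reflectChoice.1 hx <;>
  · have := one_le_coe_and_coe_le k
    exact mem_Icc.2 ⟨by omega, by omega⟩

theorem card_reflectChoice : #(reflectChoice n S) = n := by
  rw [reflectChoice, card_image_of_injective, card_univ, Fintype.card_coe, Nat.card_Icc,
    Nat.add_sub_cancel]
  intro j k hjk
  have := one_le_coe_and_coe_le j
  have := one_le_coe_and_coe_le k
  refine Subtype.ext (Nat.cast_injective (R := ℤ) ?_)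
  dsimp only at hjk
  split_ifs at hjk <;> omega

theorem meetsOnce_reflectChoice : MeetsOnce n (2 * n + 2) (reflectChoice n S) := by
  intro t ht
  obtain ⟨ht₁, ht₂⟩ := mem_Icc.1 ht
  rcases lt_trichotomy t (n + 1) with hlow | rfl | hhigh
  · obtain ⟨k, rfl⟩ := exists_coe_eq ht₁ (by omega : t ≤ n)
    rw [reflect_mem_reflectChoice_iff, coe_mem_reflectChoice_iff,
      eq_false (by omega : 2 * (k : ℤ) ≠ 2 * n + 2)]
    unfold ExactlyOne
    tauto
  · rw [show 2 * (n : ℤ) + 2 - (n + 1) = n + 1 by ring,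
      eq_true (by ring : 2 * ((n : ℤ) + 1) = 2 * n + 2)]
    have := middle_notMem_reflectChoice (S := S)
    unfold ExactlyOne
    tauto
  · obtain ⟨k, hk⟩ := exists_coe_eq (by omega : 1 ≤ 2 * n + 2 - t) (by omega : 2 * n + 2 - t ≤ n)
    rw [← hk, show t = 2 * n + 2 - k by omega, reflect_mem_reflectChoice_iff,
      coe_mem_reflectChoice_iff, eq_false (by omega : 2 * (2 * n + 2 - (k : ℤ)) ≠ 2 * n + 2)]
    unfold ExactlyOne
    tauto

end ReflectChoice

theorem isUlrich3_sort_reflectChoice {n : ℕ} (S : Finset (Icc 1 n)) :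
    IsUlrich3 [2 * n + 2] ((reflectChoice n S).sort (· ≥ ·)) [0] := by
  have hbounds (x : ℤ) (hx : x ∈ reflectChoice n S) := mem_Icc.1 (reflectChoice_subset hx)
  refine isUlrich3_singleton_iff.2 ⟨sortedGT_sort _, fun x hx => ?_, by positivity, ?_⟩
  · have := hbounds x ((mem_sort _).1 hx)
    omega
  · simpa [length_sort, card_reflectChoice] using meetsOnce_reflectChoice (S := S)

namespace UlrichP1

variable {n : ℕ}

def meetTimes (P : UlrichP1 n) : Finset ℤ := P.b.toFinset.image (· - P.c)

variable {P Q : UlrichP1 n}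

theorem mem_meetTimes {x : ℤ} : x ∈ P.meetTimes ↔ P.c + x ∈ P.b := by
  rw [meetTimes, mem_image_sub_right_iff, List.mem_toFinset]

theorem sortedGT_b (P : UlrichP1 n) : P.b.SortedGT :=
  (isUlrich3_singleton_iff.1 P.ulrich).1

theorem card_meetTimes (P : UlrichP1 n) : #P.meetTimes = n := by
  rw [meetTimes, card_image_of_injective _ sub_left_injective,
    List.toFinset_card_of_nodup P.sortedGT_b.nodup, P.len]

theorem meetsOnce_a_sub_c (P : UlrichP1 n) : MeetsOnce n (P.a - P.c) P.meetTimes := by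
  have := (isUlrich3_singleton_iff.1 P.ulrich).2.2.2
  rwa [P.len] at this

theorem a_sub_c (P : UlrichP1 n) : P.a - P.c = 2 * n + 2 :=
  P.meetsOnce_a_sub_c.eq_two_mul_add_two P.card_meetTimes

theorem meetsOnce (P : UlrichP1 n) : MeetsOnce n (2 * n + 2) P.meetTimes :=
  P.a_sub_c ▸ P.meetsOnce_a_sub_c

theorem meetTimes_subset (P : UlrichP1 n) : P.meetTimes ⊆ Icc 1 (2 * n + 1) :=
  (P.meetsOnce.subset_Icc_and_sub_mem_Icc P.card_meetTimes).1

theorem meetTimes_eq_of_shiftRel (h : shiftRel n P Q) : P.meetTimes = Q.meetTimes := by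
  obtain ⟨k, -, hb, hc⟩ := h
  ext x
  rw [mem_meetTimes, mem_meetTimes, hb, hc, List.mem_map_add_right_iff, add_right_comm,
    add_sub_cancel_right]

theorem shiftRel_of_meetTimes_eq (h : P.meetTimes = Q.meetTimes) : shiftRel n P Q := by
  refine ⟨Q.c - P.c, by linarith [P.a_sub_c, Q.a_sub_c], ?_, by ring⟩
  refine Q.sortedGT_b.pairwise.eq_of_mem_iff
    (List.pairwise_map.2 (P.sortedGT_b.pairwise.imp fun hxy => by omega)) fun x => ?_
  rw [List.mem_map_add_right_iff, ← add_sub_cancel P.c (x - (Q.c - P.c)), ← mem_meetTimes, h,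
    mem_meetTimes, show Q.c + (x - (Q.c - P.c) - P.c) = x by ring]

def ofSubset (S : Finset (Icc 1 n)) : UlrichP1 n where
  a := 2 * n + 2
  b := (reflectChoice n S).sort (· ≥ ·)
  c := 0
  len := by rw [length_sort, card_reflectChoice]
  ulrich := isUlrich3_sort_reflectChoice S

theorem meetTimes_ofSubset (S : Finset (Icc 1 n)) :
    (ofSubset S).meetTimes = reflectChoice n S := by
  ext x
  simp [mem_meetTimes, ofSubset]

def toSubset (P : UlrichP1 n) : Finset (Icc 1 n) :=
  univ.filter fun k => (k : ℤ) ∈ P.meetTimes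

theorem toSubset_ofSubset (S : Finset (Icc 1 n)) : (ofSubset S).toSubset = S := by
  ext k
  simp [toSubset, meetTimes_ofSubset, coe_mem_reflectChoice_iff]

theorem shiftRel_of_toSubset_eq (h : P.toSubset = Q.toSubset) : shiftRel n P Q := by
  refine shiftRel_of_meetTimes_eq (P.meetsOnce.eq_of_forall_mem_iff Q.meetsOnce
    P.meetTimes_subset Q.meetTimes_subset fun t ht => ?_)
  obtain ⟨k, rfl⟩ := exists_coe_eq (mem_Icc.1 ht).1 (mem_Icc.1 ht).2
  simpa [toSubset] using congrArg (k ∈ ·) h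

end UlrichP1

open UlrichP1 in
theorem bijective_lift_toSubset (n : ℕ) :
    Function.Bijective (Quot.lift (toSubset (n := n))
      fun _ _ h => by rw [toSubset, toSubset, meetTimes_eq_of_shiftRel h]) :=
  ⟨by rintro ⟨P⟩ ⟨Q⟩ h; exact Quot.sound (shiftRel_of_toSubset_eq h),
    fun S => ⟨Quot.mk _ (ofSubset S), toSubset_ofSubset S⟩⟩

theorem stmt0_general (n : ℕ) :
    Nat.card (Quot (shiftRel n)) = 2 ^ n ∧
      Nonempty (Quot (shiftRel n) ≃ Finset (Finset.Icc 1 n)) := by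
  have e := Equiv.ofBijective _ (bijective_lift_toSubset n)
  refine ⟨?_, ⟨e⟩⟩
  rw [Nat.card_congr e, Nat.card_eq_fintype_card, Fintype.card_finset, Fintype.card_coe,
    Nat.card_Icc, Nat.add_sub_cancel]

/-- There are exactly `2 ^ n` equivalence classes of Ulrich partitions of type `(1, n, 1)`;
concretely they are in bijection with the subsets of `{1, ..., n}`. -/
theorem stmt0 (n : ℕ) (hn : 1 ≤ n) :
    Nat.card (Quot (shiftRel n)) = 2 ^ n ∧
      Nonempty (Quot (shiftRel n) ≃ Finset (Finset.Icc 1 n)) :=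
  stmt0_general n
end

section
/- If (a | b_1,...,b_n | c) is an Ulrich partition of type (1,n,1) normalized with b-entries viewed relative to a and c, then a and c have the same parity, and after normalizing a = n+1, c = -(n+1), for every p ∈ {1,...,n} exactly one of p or -p lies in {b_1,...,b_n}. -/
/-!
For `1 ≤ t ≤ 2n + 1` the list `P(t)` consists of the `n` distinct `b`'s together with `a - t` and
`c + t`, so it has exactly one repeat precisely when either `a - t = c + t ∉ b`, or
`a - t ≠ c + t` and exactly one of them lies in `b`. If `a` and `c` had different parities the
second case would hold for all `2n + 1` values of `t`; but `a - t ∈ b` happens for at most `n`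
values of `t` and so does `c + t ∈ b`. After normalizing, `t = n + 1 - p` gives
`a - t = p` and `c + t = -p`.
-/

lemma Finset.mem_iff_notMem_of_card_insert_insert {α : Type*} [DecidableEq α] {s : Finset α}
    {x y : α} (hxy : x ≠ y) (h : (insert x (insert y s)).card = s.card + 1) :
    x ∈ s ↔ y ∉ s := by
  by_cases hx : x ∈ s <;> by_cases hy : y ∈ s
  · rw [insert_eq_of_mem hy, insert_eq_of_mem hx] at h
    omega
  · exact iff_of_true hx hy
  · exact iff_of_false hx (not_not.mpr hy)
  · rw [card_insert_of_notMem (by simp [hxy, hx]), card_insert_of_notMem hy] at h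
    omega

lemma IsUlrich3.nodup_middle {A B C : List ℤ} (hU : IsUlrich3 A B C) : B.Nodup := by
  have hevolve : evolve3 A B C 0 = A ++ B ++ C := by simp [evolve3]
  have hpw : (A ++ B ++ C).Pairwise (· > ·) :=
    List.isChain_iff_pairwise.mp (hevolve ▸ hU.2.2.1)
  exact ((List.pairwise_append.mp (List.pairwise_append.mp hpw).1).2.1).imp ne_of_gt

section Singletons

variable {a c : ℤ} {b : List ℤ}

lemma dim3_singleton_singleton : dim3 [a] b [c] = 2 * b.length + 1 := by
  simp only [dim3, List.length_singleton]
  ring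

lemma oneRepeat_evolve3_singleton_singleton_iff (hb : b.Nodup) (t : ℤ) :
    OneRepeat (evolve3 [a] b [c] t) ↔
      (insert (a - t) (insert (c + t) b.toFinset)).card = b.toFinset.card + 1 := by
  have hset : (evolve3 [a] b [c] t).toFinset = insert (a - t) (insert (c + t) b.toFinset) := by
    ext z
    simp [evolve3]
  rw [OneRepeat, hset, List.toFinset_card_of_nodup hb]
  simp [evolve3]

lemma IsUlrich3.mem_iff_notMem (hU : IsUlrich3 [a] b [c]) {t : ℤ} (ht₁ : 1 ≤ t)
    (ht₂ : t ≤ 2 * b.length + 1) (hne : a - t ≠ c + t) : a - t ∈ b ↔ c + t ∉ b := by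
  have hrep := hU.2.2.2 t.toNat (by omega) (by rw [dim3_singleton_singleton]; omega)
  rw [Int.toNat_of_nonneg (by omega), oneRepeat_evolve3_singleton_singleton_iff
    hU.nodup_middle] at hrep
  simpa using Finset.mem_iff_notMem_of_card_insert_insert hne hrep

lemma IsUlrich3.emod_two_eq (hU : IsUlrich3 [a] b [c]) : a % 2 = c % 2 := by
  by_contra hpar
  set s := b.toFinset
  have hcover : Finset.Icc (1 : ℤ) (2 * b.length + 1) ⊆ s.image (a - ·) ∪ s.image (· - c) := by
    intro t ht
    rw [Finset.mem_Icc] at ht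
    have hiff := hU.mem_iff_notMem ht.1 ht.2 (by omega)
    by_cases h : a - t ∈ b
    · exact Finset.mem_union_left _ (Finset.mem_image.mpr ⟨a - t, by simpa [s], by ring⟩)
    · exact Finset.mem_union_right _
        (Finset.mem_image.mpr ⟨c + t, by simpa [s] using hiff.not_left.mp h, by ring⟩)
  have hcard := (Finset.card_le_card hcover).trans (Finset.card_union_le _ _)
  rw [Int.card_Icc] at hcard
  have hleft := (Finset.card_image_le (s := s) (f := (a - ·))).trans (List.toFinset_card_le b)
  have hright := (Finset.card_image_le (s := s) (f := (· - c))).trans (List.toFinset_card_le b)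
  omega

end Singletons

/-- In an Ulrich partition `(a | b₁, ..., bₙ | c)` of type `(1, n, 1)`, the entries `a` and `c`
have the same parity, and after normalizing `a = n + 1`, `c = -(n+1)`, for every
`p ∈ {1, ..., n}` exactly one of `p`, `-p` lies among the `b`'s. -/
theorem stmt1 (n : ℕ) (a c : ℤ) (b : List ℤ) (hlen : b.length = n)
    (hU : IsUlrich3 [a] b [c]) :
    a % 2 = c % 2 ∧
      (a = (n : ℤ) + 1 → c = -((n : ℤ) + 1) →
        ∀ p : ℤ, 1 ≤ p → p ≤ (n : ℤ) → (p ∈ b ↔ ¬ (-p ∈ b))) := by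
  refine ⟨hU.emod_two_eq, ?_⟩
  rintro rfl rfl p hp₁ hpn
  have hiff := hU.mem_iff_notMem (t := n + 1 - p) (by omega) (by omega) (by omega)
  rwa [show (n : ℤ) + 1 - (n + 1 - p) = p by ring,
    show -((n : ℤ) + 1) + (n + 1 - p) = -p by ring] at hiff
end

section
/- There are no Ulrich partitions with 6 or more blocks. That is, for any r+1 ≥ 6 blocks, there is no strictly decreasing integer sequence in r+1 nonempty blocks satisfying the Ulrich condition. -/
/-- Time evolution of a partition in several blocks: with `s` blocks, every entry of the
`i`-th block (0-indexed) has `t * (s - 1 - i)` subtracted from it. -/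
def evolveGen (B : List (List ℤ)) (t : ℤ) : List ℤ :=
  ((B.zipIdx.map Prod.swap).map (fun p => p.2.map (fun x => x - t * ((B.length - 1 - p.1 : ℕ) : ℤ)))).flatten

/-- The dimension `N = Σ_{i<j} lᵢ lⱼ` of a partition with blocks of sizes `l₁, ..., lₛ`. -/
def dimGen (B : List (List ℤ)) : ℕ :=
  ((B.map List.length).sum ^ 2 - ((B.map List.length).map (· ^ 2)).sum) / 2

/-- A partition with several nonempty blocks is Ulrich: the concatenated sequence is strictly
decreasing, and for each `t ∈ {1, ..., N}` the evolved list has exactly one repeated entry. -/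
def IsUlrichGen (B : List (List ℤ)) : Prop :=
  (∀ l ∈ B, l ≠ []) ∧ StrictDec (evolveGen B 0) ∧
    ∀ t : ℕ, 1 ≤ t → t ≤ dimGen B → OneRepeat (evolveGen B (t : ℤ))

/-!
A pair of entries `x ∈ Bᵢ`, `y ∈ Bⱼ` with `i < j` becomes a repeated entry at time `t` exactly
when `x - y = t (j - i)`. There are `N` such cross pairs, each repeats at most once, and each time
`t ∈ [1, N]` has exactly one repetition; hence every cross pair repeats and `j - i ∣ x - y`.
With at least six blocks the entries of one block then agree mod 6, and the gaps between
consecutive blocks are distinct (they are repetition times) and all odd. A repetition at time `t`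
between blocks `k` apart spends at least the `k` gaps in between, whose sum is at least `k²` and
congruent to `k` mod 2. At time 2 this forces two adjacent gaps `1, 3` with a one-entry block
between them, and at time 4 two such adjacent gaps summing to 8, i.e. `1, 7` or `3, 5`. The two
windows share a gap, giving three consecutive gaps `3, 1, 7` in some order, whose sum is not
divisible by 3, or `1, 3, 5` in some order, which repeat twice at time 3.
-/

open Finset

lemma List.sum_map_range {M : Type*} [AddCommMonoid M] (f : ℕ → M) (n : ℕ) :
    ((List.range n).map f).sum = ∑ i ∈ Finset.range n, f i := by
  simp [Finset.sum, Finset.range, Multiset.range]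

lemma List.headI_mem_of_ne_nil {α : Type*} [Inhabited α] {l : List α} (hl : l ≠ []) :
    l.headI ∈ l := by
  cases l with
  | nil => contradiction
  | cons a t => simp

lemma List.Pairwise.eq_headI_or_rel {α : Type*} [Inhabited α] {R : α → α → Prop} {l : List α}
    (hl : l.Pairwise R) {x : α} (hx : x ∈ l) : x = l.headI ∨ R l.headI x := by
  cases l with
  | nil => simp at hx
  | cons a t => exact (List.mem_cons.mp hx).imp id (List.rel_of_pairwise_cons hl)

lemma Finset.sq_sum_range_eq {R : Type*} [CommSemiring R] (L : ℕ → R) (n : ℕ) :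
    (∑ i ∈ range n, L i) ^ 2 =
      ∑ i ∈ range n, L i ^ 2 + 2 * ∑ j ∈ range n, ∑ i ∈ range j, L i * L j := by
  induction n with
  | zero => simp
  | succ n ih =>
    simp only [sum_range_succ, add_sq, ih, ← sum_mul]
    ring

lemma Finset.sq_card_le_sum_of_odd {ι : Type*} {S : Finset ι} {g : ι → ℤ}
    (hinj : Set.InjOn g S) (hpos : ∀ m ∈ S, 0 < g m) (hodd : ∀ m ∈ S, g m % 2 = 1) :
    (#S : ℤ) ^ 2 ≤ ∑ m ∈ S, g m := by
  have hinj' : Set.InjOn (g · / 2) S := fun a ha b hb hab =>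
    hinj ha hb (by have := hodd a ha; have := hodd b hb; simp only at hab; omega)
  have hhalf := sum_range_le_sum (s := S.image (g · / 2)) (c := 0) (by
    simp only [mem_image, forall_exists_index, and_imp, forall_apply_eq_imp_iff₂]
    intro m hm
    have := hpos m hm
    omega)
  rw [card_image_of_injOn hinj', sum_image hinj'] at hhalf
  have hsplit : ∑ m ∈ S, g m = 2 * ∑ m ∈ S, g m / 2 + #S := by
    rw [mul_sum, card_eq_sum_ones, Nat.cast_sum, ← sum_add_distrib]
    refine sum_congr rfl fun m hm => ?_
    have := hodd m hm
    push_cast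
    omega
  have hgauss : ∀ n : ℕ, (∑ i ∈ range n, (0 + i : ℤ)) * 2 = n * (n - 1) := by
    intro n
    induction n with
    | zero => simp
    | succ n ih => rw [sum_range_succ, add_mul, ih]; push_cast; ring
  linarith [hgauss #S, show (#S : ℤ) ^ 2 = #S * (#S - 1) + #S by ring]

lemma Finset.two_dvd_sum_sub_card_of_odd {ι : Type*} {S : Finset ι} {g : ι → ℤ}
    (hodd : ∀ m ∈ S, g m % 2 = 1) : 2 ∣ ∑ m ∈ S, g m - #S := by
  rw [card_eq_sum_ones, Nat.cast_sum, Nat.cast_one, ← sum_sub_distrib]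
  exact dvd_sum fun m hm => by have := hodd m hm; omega

namespace OneRepeat

variable {l : List ℤ}

lemma sum_count_sub_one (h : OneRepeat l) : ∑ a ∈ l.toFinset, (l.count a - 1) = 1 := by
  have hpos : ∀ a ∈ l.toFinset, 1 ≤ l.count a := fun a ha =>
    List.count_pos_iff.mpr (List.mem_toFinset.mp ha)
  rw [sum_tsub_distrib _ hpos, List.sum_toFinset_count_eq_length, sum_const, smul_eq_mul,
    mul_one]
  unfold OneRepeat at h
  omega

lemma exists_two_le_count (h : OneRepeat l) : ∃ v, 2 ≤ l.count v := by
  obtain ⟨v, -, hv⟩ := exists_ne_zero_of_sum_ne_zero (h.sum_count_sub_one ▸ one_ne_zero)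
  exact ⟨v, by omega⟩

lemma count_le_two (h : OneRepeat l) (v : ℤ) : l.count v ≤ 2 := by
  by_cases hv : v ∈ l.toFinset
  · have := single_le_sum (f := fun a => l.count a - 1) (fun _ _ => Nat.zero_le _) hv
    rw [h.sum_count_sub_one] at this
    omega
  · rw [List.count_eq_zero.mpr (by simpa using hv)]
    omega

lemma eq_of_two_le_count (h : OneRepeat l) {v w : ℤ} (hv : 2 ≤ l.count v)
    (hw : 2 ≤ l.count w) : v = w := by
  by_contra hvw
  have hsub : {v, w} ⊆ l.toFinset := by
    simp only [insert_subset_iff, singleton_subset_iff, List.mem_toFinset, ← List.count_pos_iff]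
    omega
  have := sum_le_sum_of_subset (f := fun a => l.count a - 1) hsub
  rw [sum_pair hvw, h.sum_count_sub_one] at this
  omega

end OneRepeat

namespace Ulrich

variable (B : List (List ℤ))

def block (i : ℕ) : List ℤ := B.getD i []

def weight (i : ℕ) : ℤ := ((B.length - 1 - i : ℕ) : ℤ)

def shiftedBlock (t : ℤ) (i : ℕ) : List ℤ := (block B i).map (· - t * weight B i)

def head (i : ℕ) : ℤ := (block B i).headI

def last (i : ℕ) : ℤ := (block B i).reverse.headI

def gap (i : ℕ) : ℤ := last B i - head B (i + 1)

def width (i : ℕ) : ℤ := head B i - last B i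

def Collides (t i j : ℕ) (x y : ℤ) : Prop :=
  i < j ∧ j < B.length ∧ x ∈ block B i ∧ y ∈ block B j ∧ x - y = t * ((j : ℤ) - i)

def crossPairs : Finset (Σ _ : (Σ _ : ℕ, ℕ), ℤ × ℤ) :=
  ((range B.length).sigma fun j => range j).sigma fun p =>
    (block B p.2).toFinset ×ˢ (block B p.1).toFinset

variable {B}

lemma block_eq_getElem {i : ℕ} (hi : i < B.length) : block B i = B[i] :=
  List.getD_eq_getElem _ _ hi

lemma lt_length_of_mem_block {i : ℕ} {x : ℤ} (hx : x ∈ block B i) : i < B.length := by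
  by_contra hi
  rw [block, List.getD_eq_default _ _ (by omega)] at hx
  simp at hx

variable (B) in
lemma map_block_range : (List.range B.length).map (block B) = B :=
  List.ext_getElem (by simp) fun i hi _ => by
    simp [block_eq_getElem (by simpa using hi : i < B.length)]

lemma evolveGen_eq_flatten (t : ℤ) :
    evolveGen B t = ((List.range B.length).map (shiftedBlock B t)).flatten := by
  unfold evolveGen
  congr 1
  refine List.ext_getElem (by simp) fun i hi _ => ?_
  simp [shiftedBlock, weight, block_eq_getElem (by simpa using hi : i < B.length)]

lemma evolveGen_zero : evolveGen B 0 = B.flatten := by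
  have : shiftedBlock B 0 = block B := funext fun i => by simp [shiftedBlock]
  rw [evolveGen_eq_flatten, this, map_block_range]

lemma weight_sub_weight {i j : ℕ} (hij : i < j) (hj : j < B.length) :
    weight B i - weight B j = j - i := by
  unfold weight
  omega

lemma mem_shiftedBlock {t : ℤ} {i : ℕ} {v : ℤ} :
    v ∈ shiftedBlock B t i ↔ ∃ x ∈ block B i, x - t * weight B i = v := by
  simp [shiftedBlock]

lemma last_sub_head {i j : ℕ} (hij : i < j) :
    last B i - head B j = ∑ m ∈ Ico i j, gap B m + ∑ m ∈ Ico (i + 1) j, width B m := by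
  induction j, hij using Nat.le_induction with
  | base => simp [gap]
  | succ j hij ih =>
    rw [sum_Ico_succ_top (by omega), sum_Ico_succ_top hij, ← add_add_add_comm, ← ih]
    unfold gap width
    ring

lemma Collides.sub_mul_weight_mem {t i j : ℕ} {x y : ℤ} (hc : Collides B t i j x y) :
    x - t * weight B i ∈ shiftedBlock B t i ∧ x - t * weight B i ∈ shiftedBlock B t j := by
  obtain ⟨hij, hj, hx, hy, hxy⟩ := hc
  have := weight_sub_weight hij hj
  exact ⟨mem_shiftedBlock.mpr ⟨x, hx, rfl⟩,
    mem_shiftedBlock.mpr ⟨y, hy, by linear_combination -hxy + (t : ℤ) * this⟩⟩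

lemma exists_collides_of_mem_shiftedBlock {t i j : ℕ} (hij : i < j) (hj : j < B.length) {v : ℤ}
    (hvi : v ∈ shiftedBlock B t i) (hvj : v ∈ shiftedBlock B t j) :
    ∃ x y, Collides B t i j x y := by
  obtain ⟨x, hx, rfl⟩ := mem_shiftedBlock.mp hvi
  obtain ⟨y, hy, hyx⟩ := mem_shiftedBlock.mp hvj
  have hw := weight_sub_weight hij hj
  exact ⟨x, y, hij, hj, hx, hy, by linear_combination -hyx + (t : ℤ) * hw⟩

section Sorted

variable (hB : B.flatten.Pairwise (· > ·))
include hB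

lemma block_pairwise (i : ℕ) : (block B i).Pairwise (· > ·) := by
  by_cases hi : i < B.length
  · rw [block_eq_getElem hi]
    exact (List.pairwise_flatten.mp hB).1 _ (List.getElem_mem hi)
  · rw [block, List.getD_eq_default _ _ (by omega)]
    exact List.Pairwise.nil

lemma lt_of_mem_block {i j : ℕ} (hij : i < j) {x y : ℤ} (hx : x ∈ block B i)
    (hy : y ∈ block B j) : y < x := by
  have hj := lt_length_of_mem_block hy
  rw [block_eq_getElem (hij.trans hj)] at hx
  rw [block_eq_getElem hj] at hy
  exact List.pairwise_iff_getElem.mp (List.pairwise_flatten.mp hB).2 i j _ hj hij x hx y hy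

lemma count_evolveGen (t v : ℤ) :
    (evolveGen B t).count v = #{i ∈ range B.length | v ∈ shiftedBlock B t i} := by
  rw [evolveGen_eq_flatten, List.count_flatten, List.map_map, List.sum_map_range, card_filter]
  refine sum_congr rfl fun i _ => ?_
  have hnodup : (shiftedBlock B t i).Nodup :=
    List.Nodup.map sub_left_injective ((block_pairwise hB i).imp ne_of_gt)
  exact hnodup.count

lemma exists_collides_of_oneRepeat {t : ℕ} (h : OneRepeat (evolveGen B t)) :
    ∃ i j x y, Collides B t i j x y := by
  obtain ⟨v, hv⟩ := h.exists_two_le_count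
  rw [count_evolveGen hB] at hv
  obtain ⟨i, hi, j, hj, hij⟩ := one_lt_card.mp hv
  simp only [mem_filter, mem_range] at hi hj
  rcases hij.lt_or_gt with hij | hji
  · exact ⟨i, j, exists_collides_of_mem_shiftedBlock hij hj.1 hi.2 hj.2⟩
  · exact ⟨j, i, exists_collides_of_mem_shiftedBlock hji hi.1 hj.2 hi.2⟩

lemma Collides.eq_of_oneRepeat {t i j i' j' : ℕ} {x y x' y' : ℤ}
    (h : OneRepeat (evolveGen B t)) (hc : Collides B t i j x y) (hc' : Collides B t i' j' x' y') :
    i = i' ∧ j = j' := by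
  obtain ⟨hvi, hvj⟩ := hc.sub_mul_weight_mem
  obtain ⟨hvi', hvj'⟩ := hc'.sub_mul_weight_mem
  obtain ⟨hij, hj, -⟩ := hc
  obtain ⟨hij', hj', -⟩ := hc'
  have hmem : ∀ {v m}, m < B.length → v ∈ shiftedBlock B t m →
      m ∈ ({i ∈ range B.length | v ∈ shiftedBlock B t i} : Finset ℕ) := fun hm hv =>
    mem_filter.mpr ⟨mem_range.mpr hm, hv⟩
  have htwo : ∀ {v a b}, a < b → b < B.length → v ∈ shiftedBlock B t a →
      v ∈ shiftedBlock B t b → 2 ≤ (evolveGen B t).count v := fun hab hb ha' hb' => by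
    rw [count_evolveGen hB]
    exact one_lt_card.mpr ⟨_, hmem (hab.trans hb) ha', _, hmem hb hb', hab.ne⟩
  have hvv := h.eq_of_two_le_count (htwo hij hj hvi hvj) (htwo hij' hj' hvi' hvj')
  rw [← hvv] at hvi' hvj'
  by_contra hne
  obtain ⟨m, hm, hvm, hmi, hmj⟩ : ∃ m < B.length, x - t * weight B i ∈ shiftedBlock B t m ∧
      m ≠ i ∧ m ≠ j := by
    by_cases hi' : i' = i ∨ i' = j
    · exact ⟨j', hj', hvj', by omega, by omega⟩
    · exact ⟨i', by omega, hvi', by omega, by omega⟩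
  have hthree : 3 ≤ (evolveGen B t).count (x - t * weight B i) := by
    rw [count_evolveGen hB]
    exact two_lt_card.mpr ⟨i, hmem (by omega) hvi, j, hmem hj hvj, m, hmem hm hvm, by omega,
      hmi.symm, hmj.symm⟩
  have := h.count_le_two (x - t * weight B i)
  omega

lemma card_crossPairs : #(crossPairs B) = dimGen B := by
  have hcard : ∀ i, #(block B i).toFinset = (block B i).length := fun i =>
    List.toFinset_card_of_nodup ((block_pairwise hB i).imp ne_of_gt)
  have hsum : ∀ f : List ℤ → ℕ, (B.map f).sum = ∑ i ∈ range B.length, f (block B i) := by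
    intro f
    conv_lhs => rw [← map_block_range B]
    rw [List.map_map, List.sum_map_range]
    rfl
  rw [crossPairs, card_sigma, sum_sigma, dimGen, List.map_map, hsum, hsum]
  simp only [card_product, hcard, Function.comp_apply, sq_sum_range_eq]
  omega

end Sorted

end Ulrich

namespace IsUlrichGen

open Ulrich

variable {B : List (List ℤ)} (hU : IsUlrichGen B)
include hU

lemma pairwise_flatten : B.flatten.Pairwise (· > ·) := by
  have h := hU.2.1
  rw [StrictDec, evolveGen_zero] at h
  exact List.isChain_iff_pairwise.mp h

lemma block_ne_nil {i : ℕ} (hi : i < B.length) : block B i ≠ [] := by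
  rw [block_eq_getElem hi]
  exact hU.1 _ (List.getElem_mem hi)

lemma head_mem {i : ℕ} (hi : i < B.length) : head B i ∈ block B i :=
  List.headI_mem_of_ne_nil (hU.block_ne_nil hi)

lemma last_mem {i : ℕ} (hi : i < B.length) : last B i ∈ block B i :=
  List.mem_reverse.mp (List.headI_mem_of_ne_nil (by simpa using hU.block_ne_nil hi))

lemma le_head {i : ℕ} {x : ℤ} (hx : x ∈ block B i) : x ≤ head B i :=
  ((block_pairwise hU.pairwise_flatten i).eq_headI_or_rel hx).elim le_of_eq le_of_lt

lemma last_le {i : ℕ} {x : ℤ} (hx : x ∈ block B i) : last B i ≤ x :=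
  ((List.pairwise_reverse.mpr (block_pairwise hU.pairwise_flatten i)).eq_headI_or_rel
    (List.mem_reverse.mpr hx)).elim ge_of_eq le_of_lt

lemma gap_pos {i : ℕ} (hi : i + 1 < B.length) : 0 < gap B i :=
  sub_pos.mpr (lt_of_mem_block hU.pairwise_flatten i.lt_succ_self (hU.last_mem (by omega))
    (hU.head_mem hi))

lemma width_nonneg {i : ℕ} (hi : i < B.length) : 0 ≤ width B i :=
  sub_nonneg.mpr (hU.le_head (hU.last_mem hi))

lemma exists_collides {t : ℕ} (ht : 1 ≤ t) (htN : t ≤ dimGen B) :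
    ∃ i j x y, Collides B t i j x y :=
  exists_collides_of_oneRepeat hU.pairwise_flatten (hU.2.2 t ht htN)

lemma eq_of_collides {t i j i' j' : ℕ} {x y x' y' : ℤ} (ht : 1 ≤ t) (htN : t ≤ dimGen B)
    (hc : Collides B t i j x y) (hc' : Collides B t i' j' x' y') : i = i' ∧ j = j' :=
  hc.eq_of_oneRepeat hU.pairwise_flatten (hU.2.2 t ht htN) hc'

/-- Each time in `[1, N]` has a collision and a cross pair collides at most once; as there are
exactly `N` cross pairs, every one of them collides. -/
lemma exists_collides_of_mem {i j : ℕ} (hij : i < j) {x y : ℤ} (hx : x ∈ block B i)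
    (hy : y ∈ block B j) : ∃ t, 1 ≤ t ∧ t ≤ dimGen B ∧ Collides B t i j x y := by
  have hex : ∀ t ∈ Icc 1 (dimGen B), ∃ i j x y, Collides B t i j x y := fun t ht =>
    hU.exists_collides (mem_Icc.mp ht).1 (mem_Icc.mp ht).2
  choose I J X Y hc using hex
  let pair : ∀ t ∈ Icc 1 (dimGen B), Σ _ : (Σ _ : ℕ, ℕ), ℤ × ℤ :=
    fun t ht => ⟨⟨J t ht, I t ht⟩, (X t ht, Y t ht)⟩
  have hmaps : ∀ t ht, pair t ht ∈ crossPairs B := fun t ht => by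
    obtain ⟨hij, hj, hx, hy, -⟩ := hc t ht
    simp [pair, crossPairs, hij, hj, hx, hy]
  have hinj : ∀ t₁ t₂ ht₁ ht₂, pair t₁ ht₁ = pair t₂ ht₂ → t₁ = t₂ := by
    intro t₁ t₂ ht₁ ht₂ he
    simp only [pair, Sigma.mk.injEq, Prod.mk.injEq, heq_eq_eq] at he
    obtain ⟨⟨hJ, hI⟩, hX, hY⟩ := he
    have h₁ := (hc t₁ ht₁).2.2.2.2
    have h₂ := (hc t₂ ht₂).2.2.2.2
    rw [hI, hJ, hX, hY, h₂] at h₁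
    have hlt := (hc t₂ ht₂).1
    exact_mod_cast (mul_right_cancel₀ (by omega) h₁).symm
  have hmem : (⟨⟨j, i⟩, (x, y)⟩ : Σ _ : (Σ _ : ℕ, ℕ), ℤ × ℤ) ∈ crossPairs B := by
    simp [crossPairs, hij, lt_length_of_mem_block hy, hx, hy]
  obtain ⟨t, ht, he⟩ := surj_on_of_inj_on_of_card_le pair hmaps hinj
    (by rw [card_crossPairs hU.pairwise_flatten, Nat.card_Icc, Nat.add_sub_cancel]) _ hmem
  simp only [pair, Sigma.mk.injEq, Prod.mk.injEq, heq_eq_eq] at he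
  obtain ⟨⟨rfl, rfl⟩, rfl, rfl⟩ := he
  exact ⟨t, (mem_Icc.mp ht).1, (mem_Icc.mp ht).2, hc t ht⟩

lemma sub_dvd_sub {i j : ℕ} (hij : i < j) {x y : ℤ} (hx : x ∈ block B i) (hy : y ∈ block B j) :
    (j : ℤ) - i ∣ x - y := by
  obtain ⟨t, -, -, hc⟩ := hU.exists_collides_of_mem hij hx hy
  exact Dvd.intro_left _ hc.2.2.2.2.symm

/-- With six blocks, every block has a partner block at distance 2 and one at distance 3. -/
lemma six_dvd_sub (h6 : 6 ≤ B.length) {i : ℕ} {x x' : ℤ} (hx : x ∈ block B i)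
    (hx' : x' ∈ block B i) : 6 ∣ x - x' := by
  have hi := lt_length_of_mem_block hx
  have hdvd : ∀ k : ℕ, 0 < k → (i + k < B.length ∨ k ≤ i) → (k : ℤ) ∣ x - x' := by
    rintro k hk (hik | hki)
    · have h := dvd_sub (hU.sub_dvd_sub (by omega) hx (hU.head_mem hik))
        (hU.sub_dvd_sub (by omega) hx' (hU.head_mem hik))
      simpa using h
    · have h := dvd_sub (hU.sub_dvd_sub (by omega) (hU.head_mem (by omega : i - k < B.length)) hx')
        (hU.sub_dvd_sub (by omega) (hU.head_mem (by omega : i - k < B.length)) hx)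
      rw [Nat.cast_sub hki, sub_sub_cancel] at h
      simpa using h
  have h2 := hdvd 2 (by norm_num) (by omega)
  have h3 := hdvd 3 (by norm_num) (by omega)
  push_cast at h2 h3
  omega

lemma six_dvd_width (h6 : 6 ≤ B.length) {i : ℕ} (hi : i < B.length) : 6 ∣ width B i :=
  hU.six_dvd_sub h6 (hU.head_mem hi) (hU.last_mem hi)

lemma collides_last_head {t a b : ℕ} (hab : a < b) (hb : b < B.length)
    (h : ∑ m ∈ Ico a b, gap B m + ∑ m ∈ Ico (a + 1) b, width B m = t * ((b : ℤ) - a)) :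
    Collides B t a b (last B a) (head B b) :=
  ⟨hab, hb, hU.last_mem (hab.trans hb), hU.head_mem hb, (last_sub_head hab).trans h⟩

lemma exists_eq_sum_gap_add (h6 : 6 ≤ B.length) {t i j : ℕ} {x y : ℤ}
    (hc : Collides B t i j x y) :
    ∃ r, 0 ≤ r ∧ 6 ∣ r ∧ (∀ m ∈ Ico (i + 1) j, width B m ≤ r) ∧
      t * ((j : ℤ) - i) = ∑ m ∈ Ico i j, gap B m + r := by
  obtain ⟨hij, hj, hx, hy, hxy⟩ := hc
  have hw0 : ∀ m ∈ Ico (i + 1) j, 0 ≤ width B m := fun m hm =>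
    hU.width_nonneg (by rw [mem_Ico] at hm; omega)
  have hw6 : 6 ∣ ∑ m ∈ Ico (i + 1) j, width B m :=
    dvd_sum fun m hm => hU.six_dvd_width h6 (by rw [mem_Ico] at hm; omega)
  have hx' := hU.last_le hx
  have hy' := hU.le_head hy
  refine ⟨(x - last B i) + ∑ m ∈ Ico (i + 1) j, width B m + (head B j - y),
    by linarith [sum_nonneg hw0], ?_, fun m hm => ?_, by linarith [last_sub_head (B := B) hij]⟩
  · exact dvd_add (dvd_add (hU.six_dvd_sub h6 hx (hU.last_mem (hij.trans hj))) hw6)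
      (hU.six_dvd_sub h6 (hU.head_mem hj) hy)
  · linarith [single_le_sum hw0 hm]

lemma exists_gap_eq {i : ℕ} (hi : i + 1 < B.length) :
    ∃ t, 1 ≤ t ∧ t ≤ dimGen B ∧ gap B i = t ∧ Collides B t i (i + 1) (last B i) (head B (i + 1)) := by
  obtain ⟨t, ht1, htN, hc⟩ :=
    hU.exists_collides_of_mem i.lt_succ_self (hU.last_mem (by omega)) (hU.head_mem hi)
  refine ⟨t, ht1, htN, ?_, hc⟩
  simpa [gap] using hc.2.2.2.2

lemma gap_injective {i j : ℕ} (hi : i + 1 < B.length) (hj : j + 1 < B.length)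
    (h : gap B i = gap B j) : i = j := by
  obtain ⟨t, ht1, htN, hti, hci⟩ := hU.exists_gap_eq hi
  have hcj := hU.collides_last_head (t := t) j.lt_succ_self hj (by simp [← h, hti])
  exact (hU.eq_of_collides ht1 htN hci hcj).1

lemma length_sub_one_le_dimGen : B.length - 1 ≤ dimGen B := by
  have hmaps : Set.MapsTo (fun i => (gap B i).toNat) (range (B.length - 1)) (Icc 1 (dimGen B)) := by
    intro i hi
    obtain ⟨t, ht1, htN, hti, -⟩ := hU.exists_gap_eq (i := i) (by simp at hi; omega)
    simp [hti, ht1, htN]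
  have hinj : Set.InjOn (fun i => (gap B i).toNat) (range (B.length - 1)) := by
    intro i hi j hj hij
    simp only [coe_range, Set.mem_Iio] at hi hj
    have := hU.gap_pos (by omega : i + 1 < B.length)
    have := hU.gap_pos (by omega : j + 1 < B.length)
    exact hU.gap_injective (by omega) (by omega) (by simp only at hij; omega)
  simpa using card_le_card_of_injOn _ hmaps hinj

lemma dvd_sum_gap (h6 : 6 ≤ B.length) {k a : ℕ} (hk : (k : ℤ) ∣ 6) (hk0 : 0 < k)
    (ha : a + k < B.length) : (k : ℤ) ∣ ∑ m ∈ Ico a (a + k), gap B m := by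
  have h := hU.sub_dvd_sub (i := a) (by omega) (hU.last_mem (by omega)) (hU.head_mem ha)
  rw [last_sub_head (by omega), Nat.cast_add, add_sub_cancel_left] at h
  refine (dvd_add_left (dvd_sum fun m hm => hk.trans (hU.six_dvd_width h6 ?_))).mp h
  rw [mem_Ico] at hm
  omega

/-- Neighbouring gaps have the same parity; if all gaps were even, the collision at time 1
would already cost more than it may. -/
lemma gap_emod_two (h6 : 6 ≤ B.length) {i : ℕ} (hi : i + 1 < B.length) : gap B i % 2 = 1 := by
  have hsame : ∀ i, i + 1 < B.length → gap B i % 2 = gap B 0 % 2 := by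
    intro i hi
    induction i with
    | zero => rfl
    | succ i ih =>
      have h := hU.dvd_sum_gap h6 (k := 2) (a := i) (by norm_num) (by norm_num) (by omega)
      simp [sum_Ico_eq_sum_range, sum_range_succ] at h
      have := ih (by omega)
      omega
  rw [hsame i hi]
  by_contra heven
  obtain ⟨i, j, x, y, hc⟩ := hU.exists_collides (t := 1) le_rfl
    (by have := hU.length_sub_one_le_dimGen; omega)
  obtain ⟨r, hr, -, -, heq⟩ := hU.exists_eq_sum_gap_add h6 hc
  obtain ⟨hij, hj, -⟩ := hc
  have hge : ∑ m ∈ Ico i j, (2 : ℤ) ≤ ∑ m ∈ Ico i j, gap B m := sum_le_sum fun m hm => by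
    rw [mem_Ico] at hm
    have := hsame m (by omega)
    have := hU.gap_pos (by omega : m + 1 < B.length)
    omega
  rw [sum_const, Nat.card_Ico, nsmul_eq_mul, Nat.cast_sub hij.le] at hge
  push_cast at heq
  linarith

lemma sq_le_sum_gap (h6 : 6 ≤ B.length) {i j : ℕ} (hij : i ≤ j) (hj : j < B.length) :
    ((j : ℤ) - i) ^ 2 ≤ ∑ m ∈ Ico i j, gap B m := by
  have h := sq_card_le_sum_of_odd (S := Ico i j) (g := gap B)
    (fun a ha b hb hab => hU.gap_injective (by simp at ha; omega) (by simp at hb; omega) hab)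
    (fun m hm => hU.gap_pos (by simp at hm; omega))
    (fun m hm => hU.gap_emod_two h6 (by simp at hm; omega))
  rwa [Nat.card_Ico, Nat.cast_sub hij] at h

lemma two_dvd_sum_gap_sub (h6 : 6 ≤ B.length) {i j : ℕ} (hij : i ≤ j) (hj : j < B.length) :
    2 ∣ ∑ m ∈ Ico i j, gap B m - ((j : ℤ) - i) := by
  have h := two_dvd_sum_sub_card_of_odd (S := Ico i j) (g := gap B)
    (fun m hm => hU.gap_emod_two h6 (by simp at hm; omega))
  rwa [Nat.card_Ico, Nat.cast_sub hij] at h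

lemma exists_gap_add_gap_eq_four (h6 : 6 ≤ B.length) :
    ∃ p, p + 2 < B.length ∧ gap B p + gap B (p + 1) = 4 ∧ width B (p + 1) = 0 := by
  obtain ⟨i, j, x, y, hc⟩ := hU.exists_collides (t := 2) (by norm_num)
    (by have := hU.length_sub_one_le_dimGen; omega)
  obtain ⟨r, hr, hr6, hwr, heq⟩ := hU.exists_eq_sum_gap_add h6 hc
  obtain ⟨hij, hj, -⟩ := hc
  have hsq := hU.sq_le_sum_gap h6 hij.le hj
  have hpar := hU.two_dvd_sum_gap_sub h6 hij.le hj
  push_cast at heq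
  have hk : (j : ℤ) - i ≤ 2 := by nlinarith
  obtain rfl : j = i + 2 := by omega
  have hw := hwr (i + 1) (by simp)
  have hw0 := hU.width_nonneg (i := i + 1) (by omega)
  simp [sum_Ico_eq_sum_range, sum_range_succ] at heq hsq
  exact ⟨i, hj, by omega, by omega⟩

lemma exists_gap_add_gap_eq_eight (h6 : 6 ≤ B.length) :
    ∃ q, q + 2 < B.length ∧ gap B q + gap B (q + 1) = 8 ∧ width B (q + 1) = 0 := by
  obtain ⟨i, j, x, y, hc⟩ := hU.exists_collides (t := 4) (by norm_num)
    (by have := hU.length_sub_one_le_dimGen; omega)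
  obtain ⟨r, hr, hr6, hwr, heq⟩ := hU.exists_eq_sum_gap_add h6 hc
  obtain ⟨hij, hj, -⟩ := hc
  have hsq := hU.sq_le_sum_gap h6 hij.le hj
  have hpar := hU.two_dvd_sum_gap_sub h6 hij.le hj
  push_cast at heq
  have hk : (j : ℤ) - i ≤ 4 := by nlinarith
  obtain rfl | rfl : j = i + 2 ∨ j = i + 4 := by omega
  · have hw := hwr (i + 1) (by simp)
    have hw0 := hU.width_nonneg (i := i + 1) (by omega)
    simp [sum_Ico_eq_sum_range, sum_range_succ] at heq hsq
    exact ⟨i, hj, by omega, by omega⟩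
  · -- Four distinct odd gaps with sum 16 are `1, 3, 5, 7`; since both triples of consecutive
    -- gaps have sum divisible by 3, the outer two are `1` and `7`.
    have hw := hwr (i + 2) (by simp)
    have hw0 := hU.width_nonneg (i := i + 2) (by omega)
    have h3 := hU.dvd_sum_gap h6 (k := 3) (a := i) (by norm_num) (by norm_num) (by omega)
    have h3' := hU.dvd_sum_gap h6 (k := 3) (a := i + 1) (by norm_num) (by norm_num) (by omega)
    have hg : ∀ m, m + 1 < B.length → 0 < gap B m ∧ gap B m % 2 = 1 := fun m hm =>
      ⟨hU.gap_pos hm, hU.gap_emod_two h6 hm⟩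
    have := hg i (by omega)
    have := hg (i + 1) (by omega)
    have := hg (i + 2) (by omega)
    have := hg (i + 3) (by omega)
    have h14 := mt (hU.gap_injective (i := i) (j := i + 3) (by omega) (by omega)) (by omega)
    have h23 := mt (hU.gap_injective (i := i + 1) (j := i + 2) (by omega) (by omega)) (by omega)
    simp [sum_Ico_eq_sum_range, sum_range_succ, add_assoc] at heq hsq h3 h3'
    exact ⟨i + 1, by omega, show gap B (i + 1) + gap B (i + 2) = 8 by omega,
      show width B (i + 2) = 0 by omega⟩

/-- Two collisions at time 3: across the middle gap, and across all three gaps. -/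
lemma gap_add_gap_add_gap_ne_nine {a : ℕ} (ha : a + 3 < B.length) (hw₁ : width B (a + 1) = 0)
    (hw₂ : width B (a + 2) = 0) (hmid : gap B (a + 1) = 3) :
    gap B a + gap B (a + 1) + gap B (a + 2) ≠ 9 := by
  intro hsum
  have hN := hU.length_sub_one_le_dimGen
  have hc₁ := hU.collides_last_head (t := 3) (a + 1).lt_succ_self (by omega) (by simp [hmid])
  have hc₂ := hU.collides_last_head (t := 3) (a := a) (b := a + 3) (by omega) ha
    (by simp [sum_Ico_eq_sum_range, sum_range_succ, hw₁, hw₂]; linarith)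
  have := hU.eq_of_collides (by norm_num) (by omega) hc₁ hc₂
  omega

/-- The window `{1, 3}` of time 2 and the window `{1, 7}` or `{3, 5}` of time 4 share a gap. -/
lemma exists_gap_triple (h6 : 6 ≤ B.length) :
    ∃ a, a + 3 < B.length ∧ width B (a + 1) = 0 ∧ width B (a + 2) = 0 ∧ gap B (a + 1) = 3 ∧
      gap B a + gap B (a + 1) + gap B (a + 2) = 9 := by
  obtain ⟨p, hp, hp4, hwp⟩ := hU.exists_gap_add_gap_eq_four h6
  obtain ⟨q, hq, hq8, hwq⟩ := hU.exists_gap_add_gap_eq_eight h6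
  have hg : ∀ m, m + 1 < B.length → 0 < gap B m ∧ gap B m % 2 = 1 := fun m hm =>
    ⟨hU.gap_pos hm, hU.gap_emod_two h6 hm⟩
  have := hg p (by omega)
  have := hg (p + 1) (by omega)
  have := hg q (by omega)
  have := hg (q + 1) (by omega)
  have hinj : ∀ a b, a + 1 < B.length → b + 1 < B.length → gap B a = gap B b → a = b :=
    fun _ _ ha hb => hU.gap_injective ha hb
  have := hinj p q (by omega) (by omega)
  have := hinj p (q + 1) (by omega) (by omega)
  have := hinj (p + 1) q (by omega) (by omega)
  have := hinj (p + 1) (q + 1) (by omega) (by omega)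
  have hpq : p ≠ q := by rintro rfl; omega
  obtain rfl | rfl : p = q + 1 ∨ q = p + 1 := by omega
  · have h3 := hU.dvd_sum_gap h6 (k := 3) (a := q) (by norm_num) (by norm_num) (by omega)
    simp only [add_assoc, Nat.reduceAdd] at hp4 hwp
    simp [sum_Ico_eq_sum_range, sum_range_succ, add_assoc] at h3
    exact ⟨q, by omega, hwq, hwp, by omega, by omega⟩
  · have h3 := hU.dvd_sum_gap h6 (k := 3) (a := p) (by norm_num) (by norm_num) (by omega)
    simp only [add_assoc, Nat.reduceAdd] at hq8 hwq
    simp [sum_Ico_eq_sum_range, sum_range_succ, add_assoc] at h3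
    exact ⟨p, by omega, hwp, hwq, by omega, by omega⟩

end IsUlrichGen

/-- There are no Ulrich partitions with 6 or more blocks. -/
theorem stmt3 (B : List (List ℤ)) (h6 : 6 ≤ B.length) : ¬ IsUlrichGen B := by
  intro hU
  obtain ⟨a, ha, hw₁, hw₂, hmid, hsum⟩ := hU.exists_gap_triple h6
  exact hU.gap_add_gap_add_gap_ne_nine ha hw₁ hw₂ hmid hsum
end

section
/- If (A | b_1, b_2 | C) is an Ulrich partition with three blocks where the middle block has exactly two entries, then b_1 - b_2 ∈ {1, 3, 5}. -/
/-!
At each time `t ∈ [1, N]` two entries of `P(t)` coincide, and each pair of entries meets at most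
once: an entry of `A` or `C` meets one of `B` at time their distance, an entry of `A` meets one
of `C` at half their difference, if that is even. There are only `2α + 2γ + αγ = N` pairs, so
every pair meets at a time in `[1, N]`; in particular all entries of `A` and `C` have the same
parity. At `t = 1` either `b₁ + 1 ∈ A` or `b₂ - 1 ∈ C`, and negating and reversing the partition
swaps the two cases. If `b₁ + 1 ∈ A`, the parity constraint on the collisions at small times
shows that `b₁ - b₂` is odd, and that `b₁ - b₂ ≥ 7` would give two coincidences at one time.
-/

lemma List.toFinset_erase_of_two_le_count {α : Type*} [DecidableEq α] {l : List α} {a : α}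
    (h : 2 ≤ l.count a) :
    (l.erase a).toFinset = l.toFinset := by
  ext b
  simp only [List.mem_toFinset]
  by_cases hba : b = a
  · subst hba
    rw [← List.count_pos_iff, ← List.count_pos_iff, List.count_erase_self]
    omega
  · exact List.mem_erase_of_ne hba

namespace OneRepeat

variable {l : List ℤ}

lemma not_nodup (h : OneRepeat l) : ¬ l.Nodup := fun hl => by
  unfold OneRepeat at h
  rw [List.toFinset_card_of_nodup hl] at h
  omega

lemma eq_of_two_le_count_s9 (h : OneRepeat l) {x y : ℤ} (hx : 2 ≤ l.count x)
    (hy : 2 ≤ l.count y) : x = y := by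
  by_contra hxy
  have hy' : 2 ≤ (l.erase x).count y := by rwa [List.count_erase_of_ne (Ne.symm hxy)]
  have hcard := List.toFinset_card_le ((l.erase x).erase y)
  rw [List.toFinset_erase_of_two_le_count hy', List.toFinset_erase_of_two_le_count hx,
    List.length_erase_of_mem (List.count_pos_iff.mp (by omega)),
    List.length_erase_of_mem (List.count_pos_iff.mp (by omega))] at hcard
  unfold OneRepeat at h
  have : 2 ≤ l.length := (List.count_le_length).trans' hx
  omega

end OneRepeat

section Collisions

variable {A B C : List ℤ}

lemma count_evolve3 (t v : ℤ) :
    (evolve3 A B C t).count v = A.count (v + t) + B.count v + C.count (v - t) := by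
  have hA := List.count_map_of_injective A (· - t) (sub_left_injective) (v + t)
  have hC := List.count_map_of_injective C (· + t) (add_left_injective t) (v - t)
  simp only [add_sub_cancel_right, sub_add_cancel] at hA hC
  rw [evolve3, List.count_append, List.count_append, hA, hC]

lemma exists_collision_of_not_nodup (hA : A.Nodup) (hB : B.Nodup) (hC : C.Nodup) {t : ℤ}
    (h : ¬ (evolve3 A B C t).Nodup) :
    (∃ x ∈ A, ∃ b ∈ B, x - b = t) ∨ (∃ b ∈ B, ∃ y ∈ C, b - y = t) ∨
      ∃ x ∈ A, ∃ y ∈ C, x - y = 2 * t := by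
  rw [List.nodup_iff_count_le_one] at h hA hB hC
  push Not at h
  obtain ⟨v, hv⟩ := h
  rw [count_evolve3] at hv
  have hA1 := hA (v + t)
  have hB1 := hB v
  have hC1 := hC (v - t)
  rcases (by omega : (0 < A.count (v + t) ∧ 0 < B.count v) ∨ (0 < B.count v ∧
      0 < C.count (v - t)) ∨ (0 < A.count (v + t) ∧ 0 < C.count (v - t)))
    with ⟨hx, hb⟩ | ⟨hb, hy⟩ | ⟨hx, hy⟩
  · exact .inl ⟨_, List.count_pos_iff.mp hx, _, List.count_pos_iff.mp hb, by ring⟩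
  · exact .inr (.inl ⟨_, List.count_pos_iff.mp hb, _, List.count_pos_iff.mp hy, by ring⟩)
  · exact .inr (.inr ⟨_, List.count_pos_iff.mp hx, _, List.count_pos_iff.mp hy, by ring⟩)

lemma two_le_count_evolve3_of_left_of_mid {t v : ℤ} (hx : v + t ∈ A) (hb : v ∈ B) :
    2 ≤ (evolve3 A B C t).count v := by
  have := List.count_pos_iff.mpr hx
  have := List.count_pos_iff.mpr hb
  rw [count_evolve3]
  omega

lemma two_le_count_evolve3_of_mid_of_right {t v : ℤ} (hb : v ∈ B) (hy : v - t ∈ C) :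
    2 ≤ (evolve3 A B C t).count v := by
  have := List.count_pos_iff.mpr hb
  have := List.count_pos_iff.mpr hy
  rw [count_evolve3]
  omega

lemma two_le_count_evolve3_of_left_of_right {t v : ℤ} (hx : v + t ∈ A) (hy : v - t ∈ C) :
    2 ≤ (evolve3 A B C t).count v := by
  have := List.count_pos_iff.mpr hx
  have := List.count_pos_iff.mpr hy
  rw [count_evolve3]
  omega

def evenOuterPairs (A C : List ℤ) : Finset (ℤ × ℤ) :=
  (A.toFinset ×ˢ C.toFinset).filter (fun p => Even (p.1 - p.2))

/-- Entries of `A` and `C` approach each other at speed 2, so they meet at half their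
difference, and only if it is even. -/
def collisionTimes (A B C : List ℤ) : Finset ℤ :=
  (A.toFinset ×ˢ B.toFinset).image (fun p => p.1 - p.2) ∪
    (B.toFinset ×ˢ C.toFinset).image (fun p => p.1 - p.2) ∪
    (evenOuterPairs A C).image (fun p => (p.1 - p.2) / 2)

lemma card_collisionTimes_le :
    (collisionTimes A B C).card ≤
      A.length * B.length + B.length * C.length + (evenOuterPairs A C).card := by
  have hAB : (A.toFinset ×ˢ B.toFinset).card ≤ A.length * B.length := by
    rw [Finset.card_product]
    exact Nat.mul_le_mul A.toFinset_card_le B.toFinset_card_le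
  have hBC : (B.toFinset ×ˢ C.toFinset).card ≤ B.length * C.length := by
    rw [Finset.card_product]
    exact Nat.mul_le_mul B.toFinset_card_le C.toFinset_card_le
  unfold collisionTimes
  grw [Finset.card_union_le, Finset.card_union_le, Finset.card_image_le, Finset.card_image_le,
    Finset.card_image_le, hAB, hBC]

end Collisions

section Reflection

def reflectList (l : List ℤ) : List ℤ := (l.map Neg.neg).reverse

lemma mem_reflectList {l : List ℤ} {x : ℤ} : x ∈ reflectList l ↔ -x ∈ l := by
  simp [reflectList, neg_eq_iff_eq_neg]

lemma length_reflectList (l : List ℤ) : (reflectList l).length = l.length := by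
  simp [reflectList]

lemma reflectList_pair (a b : ℤ) : reflectList [a, b] = [-b, -a] := rfl

lemma evolve3_reflectList (A B C : List ℤ) (t : ℤ) :
    evolve3 (reflectList C) (reflectList B) (reflectList A) t = reflectList (evolve3 A B C t) := by
  simp only [evolve3, reflectList, List.map_append, List.reverse_append, List.map_reverse,
    List.map_map, List.append_assoc, Function.comp_def]
  congr 4 <;> funext x <;> ring

lemma oneRepeat_reflectList {l : List ℤ} (h : OneRepeat l) : OneRepeat (reflectList l) := by
  unfold OneRepeat at *
  have himage : (l.map Neg.neg).toFinset = l.toFinset.image Neg.neg := by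
    ext
    simp
  rwa [reflectList, List.toFinset_reverse, List.length_reverse, List.length_map, himage,
    Finset.card_image_of_injective _ neg_injective]

lemma strictDec_reflectList {l : List ℤ} (h : StrictDec l) : StrictDec (reflectList l) := by
  change List.IsChain _ _ at h
  change List.IsChain _ _
  rw [reflectList, List.isChain_reverse, List.isChain_map]
  exact h.imp fun _ _ hab => neg_lt_neg hab

lemma IsUlrich3.reflect {A B C : List ℤ} (hU : IsUlrich3 A B C) :
    IsUlrich3 (reflectList C) (reflectList B) (reflectList A) := by
  obtain ⟨hA, hC, hdec, hrep⟩ := hU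
  have hdim : dim3 (reflectList C) (reflectList B) (reflectList A) = dim3 A B C := by
    simp only [dim3, length_reflectList]
    ring
  refine ⟨by simpa [reflectList] using hC, by simpa [reflectList] using hA, ?_, fun t h1 h2 => ?_⟩
  · rw [evolve3_reflectList]
    exact strictDec_reflectList hdec
  · rw [evolve3_reflectList]
    exact oneRepeat_reflectList (hrep t h1 (hdim ▸ h2))

end Reflection

namespace IsUlrich3

variable {A B C : List ℤ}

lemma oneRepeat (hU : IsUlrich3 A B C) {t : ℕ} (h1 : 1 ≤ t) (h2 : t ≤ dim3 A B C) :
    OneRepeat (evolve3 A B C t) :=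
  hU.2.2.2 t h1 h2

lemma pairwise_gt (hU : IsUlrich3 A B C) : (A ++ B ++ C).Pairwise (· > ·) := by
  have h := hU.2.2.1
  change List.IsChain _ _ at h
  simpa [evolve3, List.isChain_iff_pairwise] using h

lemma nodup (hU : IsUlrich3 A B C) : A.Nodup ∧ B.Nodup ∧ C.Nodup := by
  have h : (A ++ B ++ C).Nodup := hU.pairwise_gt.imp ne_of_gt
  simp only [List.nodup_append] at h
  exact ⟨h.1.1, h.1.2.1, h.2.1⟩

lemma Icc_subset_collisionTimes (hU : IsUlrich3 A B C) :
    Finset.Icc 1 (dim3 A B C : ℤ) ⊆ collisionTimes A B C := by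
  intro t ht
  rw [Finset.mem_Icc] at ht
  lift t to ℕ using by omega
  obtain ⟨hA, hB, hC⟩ := hU.nodup
  have hrep := hU.oneRepeat (t := t) (by omega) (by omega)
  simp only [collisionTimes, evenOuterPairs, Finset.mem_union, Finset.mem_image, Finset.mem_filter,
    Finset.mem_product, List.mem_toFinset, Prod.exists]
  rcases exists_collision_of_not_nodup hA hB hC hrep.not_nodup with
    ⟨x, hx, b, hb, h⟩ | ⟨b, hb, y, hy, h⟩ | ⟨x, hx, y, hy, h⟩
  · exact .inl (.inl ⟨x, b, ⟨hx, hb⟩, h⟩)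
  · exact .inl (.inr ⟨b, y, ⟨hb, hy⟩, h⟩)
  · exact .inr ⟨x, y, ⟨⟨hx, hy⟩, ⟨t, by omega⟩⟩, by omega⟩

lemma exists_time_of_mem (hU : IsUlrich3 A B C) {x y : ℤ} (hx : x ∈ A) (hy : y ∈ C) :
    ∃ t : ℕ, 1 ≤ t ∧ t ≤ dim3 A B C ∧ x - y = 2 * t := by
  have hcover := hU.Icc_subset_collisionTimes
  have hcount : dim3 A B C ≤ (collisionTimes A B C).card := by
    simpa using Finset.card_le_card hcover
  have hpairs : (A.toFinset ×ˢ C.toFinset).card ≤ A.length * C.length := by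
    rw [Finset.card_product]
    exact Nat.mul_le_mul A.toFinset_card_le C.toFinset_card_le
  have hcard := card_collisionTimes_le (A := A) (B := B) (C := C)
  have heven : (evenOuterPairs A C).card ≤ (A.toFinset ×ˢ C.toFinset).card :=
    Finset.card_filter_le _ _
  have hall : evenOuterPairs A C = A.toFinset ×ˢ C.toFinset := by
    refine Finset.eq_of_subset_of_card_le (Finset.filter_subset _ _) ?_
    unfold dim3 at hcount
    omega
  have htimes : Finset.Icc 1 (dim3 A B C : ℤ) = collisionTimes A B C :=
    Finset.eq_of_subset_of_card_le hcover (by rw [Int.card_Icc]; unfold dim3 at *; omega)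
  have hxy : (x, y) ∈ evenOuterPairs A C := by
    rw [hall, Finset.mem_product]
    exact ⟨List.mem_toFinset.mpr hx, List.mem_toFinset.mpr hy⟩
  obtain ⟨k, hk⟩ : Even (x - y) := (Finset.mem_filter.mp hxy).2
  have hmid : (x - y) / 2 ∈ Finset.Icc 1 (dim3 A B C : ℤ) := by
    rw [htimes, collisionTimes]
    exact Finset.mem_union_right _ (Finset.mem_image_of_mem _ hxy)
  rw [Finset.mem_Icc] at hmid
  exact ⟨((x - y) / 2).toNat, by omega, by omega, by omega⟩

section TwoMiddleEntries

variable {A C : List ℤ} {b1 b2 : ℤ}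

lemma bounds (hU : IsUlrich3 A [b1, b2] C) :
    b2 < b1 ∧ (∀ x ∈ A, b1 < x) ∧ ∀ y ∈ C, y < b2 := by
  have h := hU.pairwise_gt
  simp only [List.pairwise_append, List.mem_append, List.mem_cons, List.pairwise_cons] at h
  refine ⟨h.1.2.1.1 b2 (by simp), fun x hx => h.1.2.2 x hx b1 (by simp),
    fun y hy => h.2.2 b2 (by simp) y hy⟩

lemma five_le_dim3 (hU : IsUlrich3 A [b1, b2] C) : 5 ≤ dim3 A [b1, b2] C := by
  have hA := List.length_pos_iff.mpr hU.1
  have hC := List.length_pos_iff.mpr hU.2.1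
  have := Nat.mul_le_mul hA hC
  simp only [dim3, List.length_cons, List.length_nil]
  omega

lemma collision (hU : IsUlrich3 A [b1, b2] C) {t : ℕ} (h1 : 1 ≤ t)
    (h2 : t ≤ dim3 A [b1, b2] C) :
    b1 + t ∈ A ∨ b2 + t ∈ A ∨ b1 - t ∈ C ∨ b2 - t ∈ C ∨ ∃ x ∈ A, ∃ y ∈ C, x - y = 2 * t := by
  obtain ⟨hA, hB, hC⟩ := hU.nodup
  rcases exists_collision_of_not_nodup hA hB hC (hU.oneRepeat h1 h2).not_nodup with
    ⟨x, hx, b, hb, h⟩ | ⟨b, hb, y, hy, h⟩ | h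
  · rw [List.mem_pair] at hb
    rcases hb with rfl | rfl
    · exact .inl (by rwa [← h, add_sub_cancel])
    · exact .inr (.inl (by rwa [← h, add_sub_cancel]))
  · rw [List.mem_pair] at hb
    rcases hb with rfl | rfl
    · exact .inr (.inr (.inl (by rwa [← h, sub_sub_cancel])))
    · exact .inr (.inr (.inr (.inl (by rwa [← h, sub_sub_cancel]))))
  · exact .inr (.inr (.inr (.inr h)))

lemma mem_of_two_mul_lt (hU : IsUlrich3 A [b1, b2] C) {t : ℕ} (h1 : 1 ≤ t)
    (h2 : t ≤ dim3 A [b1, b2] C) (ht : 2 * (t : ℤ) < b1 - b2 + 2) :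
    b1 + t ∈ A ∨ b2 - t ∈ C := by
  obtain ⟨hb, hA, hC⟩ := hU.bounds
  rcases hU.collision h1 h2 with h | h | h | h | ⟨x, hx, y, hy, h⟩
  · exact .inl h
  · linarith [hA _ h]
  · linarith [hC _ h]
  · exact .inr h
  · linarith [hA x hx, hC y hy]

lemma emod_two_of_mem_right (hU : IsUlrich3 A [b1, b2] C) (ha : b1 + 1 ∈ A) {y : ℤ} (hy : y ∈ C) :
    y % 2 = (b1 + 1) % 2 := by
  obtain ⟨t, -, -, h⟩ := hU.exists_time_of_mem ha hy
  omega

lemma emod_two_of_mem_left (hU : IsUlrich3 A [b1, b2] C) (ha : b1 + 1 ∈ A) {x : ℤ} (hx : x ∈ A) :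
    x % 2 = (b1 + 1) % 2 := by
  obtain ⟨y, hy⟩ := List.exists_mem_of_ne_nil C hU.2.1
  obtain ⟨t, -, -, h⟩ := hU.exists_time_of_mem hx hy
  have := emod_two_of_mem_right hU ha hy
  omega

/-- If `b₁ - b₂` is even, parity rules out every collision at time 2 except that of `b₁ + 1`
with `b₂ - 1`; but these meet `b₁` and `b₂` respectively already at time 1. -/
lemma odd_gap_of_add_one_mem (hU : IsUlrich3 A [b1, b2] C) (ha : b1 + 1 ∈ A) :
    (b1 - b2) % 2 = 1 := by
  by_contra heven
  obtain ⟨hb, hA, hC⟩ := hU.bounds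
  have hN := hU.five_le_dim3
  have hgap : b1 - b2 = 2 ∧ b2 - 1 ∈ C := by
    rcases hU.collision (t := 2) (by omega) (by omega) with h | h | h | h | ⟨x, hx, y, hy, h⟩
    · have := emod_two_of_mem_left hU ha h; omega
    · have := hA _ h; omega
    · have := hC _ h; omega
    · have := emod_two_of_mem_right hU ha h; omega
    · have := hA x hx
      have := hC y hy
      exact ⟨by omega, by rwa [show y = b2 - 1 by omega] at hy⟩
  have hb1 : 2 ≤ (evolve3 A [b1, b2] C (1 : ℕ)).count b1 :=
    two_le_count_evolve3_of_left_of_mid (by simpa using ha) (by simp)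
  have hb2 : 2 ≤ (evolve3 A [b1, b2] C (1 : ℕ)).count b2 :=
    two_le_count_evolve3_of_mid_of_right (by simp) (by simpa using hgap.2)
  have := (hU.oneRepeat (t := 1) le_rfl (by omega)).eq_of_two_le_count_s9 hb1 hb2
  omega

/-- If `b₁ - b₂ ≥ 7`, the collisions at times `2, 3, 4` force `b₁ + 3 ∈ A` and
`b₂ - 2, b₂ - 4 ∈ C`; then the pairs `(b₁ + 1, b₂ - 4)` and `(b₁ + 3, b₂ - 2)` collide
at the same time. -/
lemma gap_lt_seven_of_add_one_mem (hU : IsUlrich3 A [b1, b2] C) (ha : b1 + 1 ∈ A) :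
    b1 - b2 < 7 := by
  by_contra! hge
  have hodd := odd_gap_of_add_one_mem hU ha
  have hN := hU.five_le_dim3
  have hc2 : b2 - 2 ∈ C := by
    rcases hU.mem_of_two_mul_lt (t := 2) (by omega) (by omega) (by push_cast; omega) with h | h
    · have := emod_two_of_mem_left hU ha h; omega
    · exact h
  have ha3 : b1 + 3 ∈ A := by
    rcases hU.mem_of_two_mul_lt (t := 3) (by omega) (by omega) (by push_cast; omega) with h | h
    · exact h
    · have := emod_two_of_mem_right hU ha h; omega
  have hc4 : b2 - 4 ∈ C := by
    rcases hU.mem_of_two_mul_lt (t := 4) (by omega) (by omega) (by push_cast; omega) with h | h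
    · have := emod_two_of_mem_left hU ha h; omega
    · exact h
  obtain ⟨t, ht1, htN, ht⟩ := hU.exists_time_of_mem ha hc4
  have h1 : 2 ≤ (evolve3 A [b1, b2] C t).count (b1 + 1 - t) :=
    two_le_count_evolve3_of_left_of_right (by rwa [sub_add_cancel])
      (by rwa [show b1 + 1 - t - t = b2 - 4 by omega])
  have h3 : 2 ≤ (evolve3 A [b1, b2] C t).count (b1 + 3 - t) :=
    two_le_count_evolve3_of_left_of_right (by rwa [sub_add_cancel])
      (by rwa [show b1 + 3 - t - t = b2 - 2 by omega])
  have := (hU.oneRepeat ht1 htN).eq_of_two_le_count_s9 h1 h3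
  omega

lemma gap_of_add_one_mem (hU : IsUlrich3 A [b1, b2] C) (ha : b1 + 1 ∈ A) :
    b1 - b2 = 1 ∨ b1 - b2 = 3 ∨ b1 - b2 = 5 := by
  have := odd_gap_of_add_one_mem hU ha
  have := gap_lt_seven_of_add_one_mem hU ha
  have := hU.bounds.1
  omega

end TwoMiddleEntries

end IsUlrich3

/-- If `(A | b₁, b₂ | C)` is an Ulrich partition whose middle block has exactly two entries,
then `b₁ - b₂ ∈ {1, 3, 5}`. -/
theorem stmt9 (A C : List ℤ) (b1 b2 : ℤ) (hU : IsUlrich3 A [b1, b2] C) :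
    b1 - b2 = 1 ∨ b1 - b2 = 3 ∨ b1 - b2 = 5 := by
  rcases hU.mem_of_two_mul_lt (t := 1) le_rfl (by linarith [hU.five_le_dim3])
      (by have := hU.bounds.1; push_cast; omega) with h | h
  · exact hU.gap_of_add_one_mem (by simpa using h)
  · have hU' := hU.reflect
    rw [reflectList_pair] at hU'
    have := hU'.gap_of_add_one_mem (by rw [mem_reflectList]; convert h using 1; push_cast; ring)
    omega
end

section
/- For k ≥ 1, let (2 | 1, 0 | C_k) be the partition obtained from (2 | 1, 0 | ∅) by greedily adding k c-entries (each new c is added at the earliest time with no scheduled intersection, placed to collide with the leftmost entry among A and B at that time). This partition is Ulrich if and only if k = (4^{m+1} - 1)/3 for some m ≥ 0. -/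
/-- The `j`-th entry (`j ≥ 1`) of the sequence of `c`-values produced by the greedy algorithm
applied to `(2 | 1, 0 | ∅)`: after the `m`-th Ulrich stage (of `(4^m - 1)/3` entries), the next
block of entries is `-2·4^m - 2ℓ` for `ℓ = 1, ..., 4^m`.  Here `m = log₄(3j)`. -/
def cval (j : ℕ) : ℤ :=
  -2 * 4 ^ (Nat.log 4 (3 * j)) - 2 * ((j - (4 ^ (Nat.log 4 (3 * j)) - 1) / 3 : ℕ) : ℤ)

/-- The `C`-block obtained from `(2 | 1, 0 | ∅)` by greedily adding `k` `c`-entries. -/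
def Ck (k : ℕ) : List ℤ := (List.range k).map (fun i => cval (i + 1))

/-! The entries of `C_k` are `c_j = -2 v_j`, where `v_1 < v_2 < ⋯` (`negHalfCval`)
enumerates `S = ⋃ₘ (4^m, 2·4^m]` (`greedyBlocks`). At time `t ≥ 3` the entry `2 - t` meets
some `c_j + t` iff `t - 1 = v_j`, and one of the middle entries `1, 0` does iff `⌊t/2⌋ = v_j`.
Since `(2·4^m, 4^(m+1)]` is the complementary gap, exactly one of `t - 1` and `⌊t/2⌋` lies
in `S`. Cutting `S` off at `v_k` keeps this dichotomy up to the dimension `3k + 2` precisely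
when `v_k = 2·4^M` closes a block, i.e. `3k = 4^(M+1) - 1`; otherwise time `v_k + 2` has no
intersection at all. -/

lemma oneRepeat_cons_of_mem {a : ℤ} {l : List ℤ} (ha : a ∈ l) :
    OneRepeat (a :: l) ↔ l.Nodup := by
  rw [OneRepeat, List.toFinset_cons, Finset.card_insert_of_mem (List.mem_toFinset.2 ha),
    List.length_cons, Nat.add_right_cancel_iff]
  exact Multiset.toFinset_card_eq_card_iff_nodup (m := (l : Multiset ℤ))

lemma oneRepeat_cons_of_not_mem {a : ℤ} {l : List ℤ} (ha : a ∉ l) :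
    OneRepeat (a :: l) ↔ OneRepeat l := by
  rw [OneRepeat, OneRepeat, List.toFinset_cons,
    Finset.card_insert_of_notMem (mt List.mem_toFinset.1 ha), List.length_cons]
  omega

lemma oneRepeat_cons_iff_mem {a : ℤ} {l : List ℤ} (hl : l.Nodup) : OneRepeat (a :: l) ↔ a ∈ l := by
  by_cases ha : a ∈ l
  · simpa [ha] using (oneRepeat_cons_of_mem ha).2 hl
  · rw [oneRepeat_cons_of_not_mem ha, OneRepeat, List.toFinset_card_of_nodup hl]
    simpa using ha

lemma oneRepeat_cons_one_zero_iff {a : ℤ} {l : List ℤ} (hl : l.Nodup) (h01 : ¬ (0 ∈ l ∧ 1 ∈ l)) :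
    OneRepeat (a :: 1 :: 0 :: l) ↔ (a ∈ 1 :: 0 :: l ↔ ¬ (0 ∈ l ∨ 1 ∈ l)) := by
  by_cases ha : a ∈ 1 :: 0 :: l
  · rw [oneRepeat_cons_of_mem ha, List.nodup_cons, List.nodup_cons, List.mem_cons]
    simp only [ha, hl, true_iff, and_true, one_ne_zero, false_or]
    tauto
  · rw [oneRepeat_cons_of_not_mem ha]
    by_cases h1 : (1 : ℤ) ∈ l
    · rw [oneRepeat_cons_of_mem (List.mem_cons_of_mem 0 h1), List.nodup_cons]
      tauto
    · rw [oneRepeat_cons_of_not_mem (by simpa using h1), oneRepeat_cons_iff_mem hl]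
      tauto

def negHalfCval (j : ℕ) : ℕ :=
  4 ^ Nat.log 4 (3 * j) + (j - (4 ^ Nat.log 4 (3 * j) - 1) / 3)

lemma cval_eq_neg_two_mul (j : ℕ) : cval j = -2 * (negHalfCval j : ℤ) := by
  unfold cval negHalfCval
  push_cast
  ring

lemma pow_four_mod_three (m : ℕ) : 4 ^ m % 3 = 1 := by
  simp [Nat.pow_mod]

lemma negHalfCval_spec {j : ℕ} (hj : 1 ≤ j) :
    4 ^ Nat.log 4 (3 * j) ≤ 3 * j ∧ 3 * j < 4 * 4 ^ Nat.log 4 (3 * j) ∧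
      3 * negHalfCval j = 3 * j + 2 * 4 ^ Nat.log 4 (3 * j) + 1 := by
  have hle : 4 ^ Nat.log 4 (3 * j) ≤ 3 * j := Nat.pow_log_le_self 4 (by omega)
  have hlt : 3 * j < 4 ^ (Nat.log 4 (3 * j) + 1) := Nat.lt_pow_succ_log_self (by norm_num) _
  have hmod := pow_four_mod_three (Nat.log 4 (3 * j))
  rw [pow_succ] at hlt
  unfold negHalfCval
  omega

lemma negHalfCval_strictMono : StrictMono negHalfCval := by
  refine strictMono_nat_of_lt_succ fun j => ?_
  rcases Nat.eq_zero_or_pos j with rfl | hj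
  · decide
  obtain ⟨hle, hlt, heq⟩ := negHalfCval_spec (j := j) hj
  obtain ⟨hle', hlt', heq'⟩ := negHalfCval_spec (j := j + 1) (by omega)
  have hm : Nat.log 4 (3 * j) ≤ Nat.log 4 (3 * (j + 1)) := Nat.log_mono_right (by omega)
  rcases hm.eq_or_lt with hm | hm
  · rw [← hm] at heq'
    omega
  · have := Nat.pow_le_pow_right (show 0 < 4 by norm_num) hm
    rw [pow_succ] at this
    omega

def greedyBlocks : Set ℕ := {v | ∃ m, 4 ^ m < v ∧ v ≤ 2 * 4 ^ m}

lemma two_le_of_mem_greedyBlocks {v : ℕ} (hv : v ∈ greedyBlocks) : 2 ≤ v := by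
  obtain ⟨m, hm, -⟩ := hv
  have := Nat.one_le_pow m 4 (by norm_num)
  omega

lemma not_mem_greedyBlocks_of_gap {m v : ℕ} (h₁ : 2 * 4 ^ m < v) (h₂ : v ≤ 4 ^ (m + 1)) :
    v ∉ greedyBlocks := by
  rintro ⟨n, hn₁, hn₂⟩
  rcases le_or_gt n m with h | h
  · have := Nat.pow_le_pow_right (show 0 < 4 by norm_num) h
    omega
  · have := Nat.pow_le_pow_right (show 0 < 4 by norm_num) h
    omega

lemma negHalfCval_mem_greedyBlocks {j : ℕ} (hj : 1 ≤ j) : negHalfCval j ∈ greedyBlocks := by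
  obtain ⟨hle, hlt, heq⟩ := negHalfCval_spec hj
  exact ⟨Nat.log 4 (3 * j), by omega, by omega⟩

lemma exists_negHalfCval_eq {v : ℕ} (hv : v ∈ greedyBlocks) : ∃ j, 1 ≤ j ∧ negHalfCval j = v := by
  obtain ⟨m, hm₁, hm₂⟩ := hv
  have hmod := pow_four_mod_three m
  have hlog : Nat.log 4 (3 * (v - (2 * 4 ^ m + 1) / 3)) = m :=
    Nat.log_eq_of_pow_le_of_lt_pow (by omega) (by rw [pow_succ]; omega)
  refine ⟨v - (2 * 4 ^ m + 1) / 3, by omega, ?_⟩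
  have := (negHalfCval_spec (j := v - (2 * 4 ^ m + 1) / 3) (by omega)).2.2
  rw [hlog] at this
  omega

lemma mem_negHalfCval_image_Icc {k v : ℕ} :
    v ∈ negHalfCval '' Set.Icc 1 k ↔ v ∈ greedyBlocks ∧ v ≤ negHalfCval k := by
  constructor
  · rintro ⟨j, ⟨hj₁, hjk⟩, rfl⟩
    exact ⟨negHalfCval_mem_greedyBlocks hj₁, negHalfCval_strictMono.monotone hjk⟩
  · rintro ⟨hv, hvk⟩
    obtain ⟨j, hj, rfl⟩ := exists_negHalfCval_eq hv
    exact ⟨j, ⟨hj, negHalfCval_strictMono.le_iff_le.1 hvk⟩, rfl⟩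

lemma mem_greedyBlocks_iff_even_log {v : ℕ} (hv : 2 ≤ v) :
    v ∈ greedyBlocks ↔ Even (Nat.log 2 (v - 1)) := by
  have hpow (m : ℕ) : (4 : ℕ) ^ m = 2 ^ (m + m) := by rw [← two_mul, pow_mul]; norm_num
  constructor
  · rintro ⟨m, hm₁, hm₂⟩
    refine ⟨m, Nat.log_eq_of_pow_le_of_lt_pow ?_ ?_⟩ <;> rw [hpow] at hm₁ hm₂
    · omega
    · rw [pow_succ]; omega
  · rintro ⟨m, hm⟩
    have hle := Nat.pow_log_le_self 2 (show v - 1 ≠ 0 by omega)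
    have hlt := Nat.lt_pow_succ_log_self (show 1 < 2 by norm_num) (v - 1)
    rw [hm, pow_succ] at hlt
    rw [hm] at hle
    exact ⟨m, by rw [hpow]; omega, by rw [hpow]; omega⟩

lemma sub_one_mem_greedyBlocks_iff {t : ℕ} (ht : 3 ≤ t) :
    t - 1 ∈ greedyBlocks ↔ t / 2 ∉ greedyBlocks := by
  rcases ht.eq_or_lt with rfl | ht
  · exact iff_of_true ⟨0, by norm_num, by norm_num⟩ fun h => by
      have := two_le_of_mem_greedyBlocks h; omega
  rw [mem_greedyBlocks_iff_even_log (by omega), mem_greedyBlocks_iff_even_log (by omega),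
    show t / 2 - 1 = (t - 2) / 2 by omega, Nat.log_div_base, show t - 1 - 1 = t - 2 by omega]
  have : 1 ≤ Nat.log 2 (t - 2) := Nat.le_log_of_pow_le (by norm_num) (by omega)
  rw [Nat.even_sub this]
  simp

lemma negHalfCval_of_three_mul_eq {k M : ℕ} (h : 3 * k = 4 ^ (M + 1) - 1) :
    negHalfCval k = 2 * 4 ^ M := by
  have hpos := Nat.one_le_pow M 4 (by norm_num)
  rw [pow_succ] at h
  obtain ⟨-, -, heq⟩ := negHalfCval_spec (j := k) (by omega)
  have hlog : Nat.log 4 (3 * k) = M :=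
    Nat.log_eq_of_pow_le_of_lt_pow (by omega) (by rw [pow_succ]; omega)
  rw [hlog] at heq
  omega

lemma negHalfCval_add_one_mem {k : ℕ} (hk : 1 ≤ k) (h : ∀ M, 3 * k ≠ 4 ^ (M + 1) - 1) :
    negHalfCval k + 1 ∈ greedyBlocks := by
  obtain ⟨hle, hlt, heq⟩ := negHalfCval_spec hk
  have hne := h (Nat.log 4 (3 * k))
  rw [pow_succ] at hne
  exact ⟨Nat.log 4 (3 * k), by omega, by omega⟩

lemma negHalfCval_le {k : ℕ} (hk : 1 ≤ k) : negHalfCval k ≤ 3 * k := by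
  obtain ⟨hle, -, heq⟩ := negHalfCval_spec hk
  omega

lemma mem_Ck_map_add {k : ℕ} {t x : ℤ} :
    x ∈ (Ck k).map (· + t) ↔ ∃ j ∈ Set.Icc 1 k, t - 2 * (negHalfCval j : ℤ) = x := by
  simp only [Ck, List.map_map, List.mem_map, List.mem_range, Function.comp_apply,
    cval_eq_neg_two_mul, Set.mem_Icc]
  constructor
  · rintro ⟨i, hi, rfl⟩
    exact ⟨i + 1, ⟨by omega, by omega⟩, by ring⟩
  · rintro ⟨j, ⟨hj, hjk⟩, rfl⟩
    exact ⟨j - 1, by omega, by rw [Nat.sub_add_cancel hj]; ring⟩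

lemma nodup_Ck_map_add (k : ℕ) (t : ℤ) : ((Ck k).map (· + t)).Nodup := by
  rw [Ck, List.map_map]
  refine List.nodup_range.map fun a b h => ?_
  simp only [Function.comp_apply, cval_eq_neg_two_mul] at h
  exact Nat.succ_injective (negHalfCval_strictMono.injective (by simpa using h))

lemma strictDec_evolve_zero (k : ℕ) : StrictDec (evolve3 [2] [1, 0] (Ck k) 0) := by
  have hneg : ∀ x ∈ (Ck k).map (· + 0), x < 0 := by
    rintro x hx
    obtain ⟨j, ⟨hj, -⟩, rfl⟩ := mem_Ck_map_add.1 hx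
    have := two_le_of_mem_greedyBlocks (negHalfCval_mem_greedyBlocks hj)
    omega
  have hdec : ((Ck k).map (· + 0)).Pairwise (· > ·) := by
    rw [Ck, List.map_map, List.pairwise_map]
    refine List.pairwise_lt_range.imp fun {a b} hab => ?_
    simp only [Function.comp_apply, cval_eq_neg_two_mul]
    have := negHalfCval_strictMono (show a + 1 < b + 1 by omega)
    omega
  rw [StrictDec, List.Chain', List.isChain_iff_pairwise, evolve3]
  simp only [List.map_cons, List.map_nil, List.cons_append, List.nil_append,
    List.pairwise_cons, List.mem_cons]
  refine ⟨?_, ⟨?_, ⟨hneg, hdec⟩⟩⟩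
  · rintro x (rfl | rfl | hx)
    · norm_num
    · norm_num
    · linarith [hneg x hx]
  · rintro x (rfl | hx)
    · norm_num
    · linarith [hneg x hx]

lemma oneRepeat_evolve_iff {k t : ℕ} (ht : 1 ≤ t) :
    OneRepeat (evolve3 [2] [1, 0] (Ck k) t) ↔
      (t ≤ 2 ∨ t - 1 ∈ negHalfCval '' Set.Icc 1 k ↔ t / 2 ∉ negHalfCval '' Set.Icc 1 k) := by
  have hA : (2 - t : ℤ) ∈ (Ck k).map (· + (t : ℤ)) ↔ t - 1 ∈ negHalfCval '' Set.Icc 1 k := by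
    rw [mem_Ck_map_add]
    constructor <;> rintro ⟨j, hj, h⟩ <;> exact ⟨j, hj, by omega⟩
  have hB : ((0 : ℤ) ∈ (Ck k).map (· + (t : ℤ)) ∨ (1 : ℤ) ∈ (Ck k).map (· + (t : ℤ))) ↔
      t / 2 ∈ negHalfCval '' Set.Icc 1 k := by
    simp only [mem_Ck_map_add, Set.mem_image]
    constructor
    · rintro (⟨j, hj, h⟩ | ⟨j, hj, h⟩) <;> exact ⟨j, hj, by omega⟩
    · rintro ⟨j, hj, h⟩
      rcases Nat.mod_two_eq_zero_or_one t with h2 | h2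
      · exact Or.inl ⟨j, hj, by omega⟩
      · exact Or.inr ⟨j, hj, by omega⟩
  have hB' : ¬ ((0 : ℤ) ∈ (Ck k).map (· + (t : ℤ)) ∧ (1 : ℤ) ∈ (Ck k).map (· + (t : ℤ))) := by
    simp only [mem_Ck_map_add]
    rintro ⟨⟨j, -, h⟩, ⟨j', -, h'⟩⟩
    omega
  have hsmall : ((2 - t : ℤ) = 1 ∨ (2 - t : ℤ) = 0) ↔ t ≤ 2 := by omega
  rw [show evolve3 [2] [1, 0] (Ck k) t = (2 - (t : ℤ)) :: 1 :: 0 :: (Ck k).map (· + (t : ℤ)) by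
      simp [evolve3],
    oneRepeat_cons_one_zero_iff (nodup_Ck_map_add k t) hB', List.mem_cons, List.mem_cons,
    ← or_assoc, hsmall, hA, hB]

lemma isUlrich3_iff {k : ℕ} (hk : 1 ≤ k) :
    IsUlrich3 [2] [1, 0] (Ck k) ↔ ∀ t, 3 ≤ t → t ≤ 3 * k + 2 →
      (t - 1 ∈ greedyBlocks ∧ t - 1 ≤ negHalfCval k ↔
        ¬ (t / 2 ∈ greedyBlocks ∧ t / 2 ≤ negHalfCval k)) := by
  have hdim : dim3 [2] [1, 0] (Ck k) = 3 * k + 2 := by simp [dim3, Ck]; ring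
  have hC : Ck k ≠ [] := by simp [Ck]; omega
  simp only [IsUlrich3, hdim, ne_eq, List.cons_ne_nil, not_false_eq_true, hC,
    strictDec_evolve_zero, true_and]
  refine forall_congr' fun t => ⟨fun h ht3 htk => ?_, fun h ht1 htk => ?_⟩
  · have := (oneRepeat_evolve_iff (show 1 ≤ t by omega)).1 (h (by omega) htk)
    rwa [mem_negHalfCval_image_Icc, mem_negHalfCval_image_Icc, or_iff_right (by omega)] at this
  · rw [oneRepeat_evolve_iff ht1, mem_negHalfCval_image_Icc, mem_negHalfCval_image_Icc]
    rcases le_or_gt t 2 with ht2 | ht3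
    · exact iff_of_true (Or.inl ht2) fun h' => by
        have := two_le_of_mem_greedyBlocks h'.1; omega
    · rw [or_iff_right (by omega)]
      exact h ht3 htk

/-- The partition `(2 | 1, 0 | C_k)` obtained by greedily adding `k` `c`-entries is Ulrich
if and only if `k = (4^(m+1) - 1)/3` for some `m ≥ 0`. -/
theorem stmt13 (k : ℕ) (hk : 1 ≤ k) :
    IsUlrich3 [2] [1, 0] (Ck k) ↔ ∃ m : ℕ, 3 * k = 4 ^ (m + 1) - 1 := by
  rw [isUlrich3_iff hk]
  constructor
  · intro h
    by_contra! hne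
    have hv := two_le_of_mem_greedyBlocks (negHalfCval_mem_greedyBlocks hk)
    have hmem := negHalfCval_add_one_mem hk hne
    have hnot := (sub_one_mem_greedyBlocks_iff (t := negHalfCval k + 2) (by omega)).1 hmem
    have := (h (negHalfCval k + 2) (by omega) (by have := negHalfCval_le hk; omega)).2
      fun h' => hnot h'.1
    omega
  · rintro ⟨M, hM⟩ t ht3 htk
    have hgap : t - 1 ∈ greedyBlocks → t - 1 ≤ 2 * 4 ^ M := fun h =>
      not_lt.1 fun h' => not_mem_greedyBlocks_of_gap h' (by omega) h
    have hhalf : t / 2 ≤ 2 * 4 ^ M := by rw [pow_succ] at hM; omega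
    have := sub_one_mem_greedyBlocks_iff ht3
    rw [negHalfCval_of_three_mul_eq hM]
    tauto
end

section
/- For every u ≥ 1, the partition P_u = (6u+5, 2u+1 | 2u, 2u-2, ..., 4, 2, -1, -3, ..., -2u+3, -2u+1 | -2u-1, -6u-3) of type (2, 2u, 2) is Ulrich. -/
/-- The middle block of `P_u`: the positive even numbers `2u, 2u-2, ..., 2` followed by the
negative odd numbers `-1, -3, ..., -(2u-1)`. -/
def Bu (u : ℕ) : List ℤ :=
  ((List.range u).map (fun i => 2 * ((u : ℤ) - i))) ++
    ((List.range u).map (fun i => -(2 * (i : ℤ) + 1)))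

/-- The first block of `P_u`. -/
def PuA (u : ℕ) : List ℤ := [6 * (u : ℤ) + 5, 2 * (u : ℤ) + 1]

/-- The last block of `P_u`. -/
def PuC (u : ℕ) : List ℤ := [-2 * (u : ℤ) - 1, -6 * (u : ℤ) - 3]

/-!
The middle block never moves, has no repeated entry, and consists of the even numbers in
`[2, 2u]` and the odd numbers in `[-2u, -1]`. The outer entries `α₁ = 6u+5-t`, `α₂ = 2u+1-t`,
`γ₁ = t-2u-1`, `γ₂ = t-6u-3` of `P(t)` all have the parity of `t + 1`, so at each time only one
half of the middle block matters. Each outer entry sweeps through each half during a window of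
about `u` times of the right parity; these windows, together with the four meetings
`α₂ = γ₁`, `α₂ = γ₂`, `α₁ = γ₁`, `α₁ = γ₂` at `t = 2u+1, 4u+2, 4u+3, 6u+4`, tile
`{1, …, 8u+4}`, so at each time exactly one entry collides and the other three stay distinct.
-/

theorem OneRepeat.of_perm {l l' : List ℤ} (h : l.Perm l') (hl : OneRepeat l) : OneRepeat l' := by
  rwa [OneRepeat, ← List.toFinset_eq_of_perm _ _ h, ← h.length_eq]

theorem oneRepeat_cons_of_mem_s15 {x : ℤ} {l : List ℤ} (hl : l.Nodup) (hx : x ∈ l) :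
    OneRepeat (x :: l) := by
  rw [OneRepeat, List.toFinset_cons, Finset.insert_eq_of_mem (List.mem_toFinset.mpr hx),
    List.toFinset_card_of_nodup hl, List.length_cons]

theorem oneRepeat_middle_append {l₁ l₂ B : List ℤ} {x : ℤ} (hl : (l₁ ++ l₂).Nodup)
    (hB : B.Nodup) (hdisj : ∀ y ∈ l₁ ++ l₂, y ∉ B) (hx : x ∈ l₁ ++ l₂ ∨ x ∈ B) :
    OneRepeat (l₁ ++ x :: l₂ ++ B) := by
  have hperm : (x :: (l₁ ++ l₂ ++ B)).Perm (l₁ ++ x :: l₂ ++ B) :=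
    (List.perm_middle.append_right B).symm
  refine (oneRepeat_cons_of_mem_s15 ?_ ?_).of_perm hperm
  · exact List.nodup_append.mpr ⟨hl, hB, fun y hy z hz hyz => hdisj y hy (hyz ▸ hz)⟩
  · exact List.mem_append.mpr hx

-- In `Bu` the binder `i : ℤ` forces `List.range u` to be lifted to `List ℤ` monadically.
theorem Bu_eq_map_range (u : ℕ) : Bu u =
    (List.range u).map (fun i : ℕ => 2 * ((u : ℤ) - i)) ++
      (List.range u).map (fun i : ℕ => -(2 * (i : ℤ) + 1)) := by
  simp [Bu, ← List.map_eq_flatMap, List.map_map, Function.comp_def]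

theorem mem_Bu {u : ℕ} {x : ℤ} :
    x ∈ Bu u ↔ (2 ∣ x ∧ 2 ≤ x ∧ x ≤ 2 * u) ∨ (¬ 2 ∣ x ∧ -(2 * u : ℤ) ≤ x ∧ x ≤ -1) := by
  simp only [Bu_eq_map_range, List.mem_append, List.mem_map, List.mem_range]
  constructor
  · rintro (⟨i, hi, rfl⟩ | ⟨i, hi, rfl⟩) <;> omega
  · rintro (⟨h2, hlo, hhi⟩ | ⟨h2, hlo, hhi⟩)
    · exact Or.inl ⟨(2 * u - x).toNat / 2, by omega, by omega⟩
    · exact Or.inr ⟨(-x - 1).toNat / 2, by omega, by omega⟩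

theorem pairwise_gt_Bu (u : ℕ) : (Bu u).Pairwise (· > ·) := by
  rw [Bu_eq_map_range]
  refine List.pairwise_append.mpr ⟨?_, ?_, ?_⟩
  · exact List.pairwise_map.mpr (List.pairwise_lt_range.imp (by omega))
  · exact List.pairwise_map.mpr (List.pairwise_lt_range.imp (by omega))
  · simp only [List.mem_map, List.mem_range]
    rintro _ ⟨i, hi, rfl⟩ _ ⟨j, hj, rfl⟩
    omega

theorem nodup_Bu (u : ℕ) : (Bu u).Nodup :=
  (pairwise_gt_Bu u).imp ne_of_gt

theorem dim3_Pu (u : ℕ) : dim3 (PuA u) (Bu u) (PuC u) = 8 * u + 4 := by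
  simp only [dim3, PuA, PuC, Bu_eq_map_range, List.length_append, List.length_map, List.length_range,
    List.length_cons, List.length_nil]
  ring

theorem evolve3_Pu_perm (u : ℕ) (t : ℤ) : (evolve3 (PuA u) (Bu u) (PuC u) t).Perm
    ([6 * u + 5 - t, 2 * u + 1 - t, -2 * u - 1 + t, -6 * u - 3 + t] ++ Bu u) := by
  have h := (List.perm_append_comm (l₁ := Bu u) (l₂ := [-2 * (u : ℤ) - 1 + t, -6 * u - 3 + t]))
  simpa [evolve3, PuA, PuC] using h

theorem strictDec_Pu (u : ℕ) : StrictDec (evolve3 (PuA u) (Bu u) (PuC u) 0) := by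
  refine List.isChain_iff_pairwise.mpr ?_
  simp only [evolve3, PuA, PuC, List.map_cons, List.map_nil, sub_zero, add_zero]
  refine List.pairwise_append.mpr ⟨List.pairwise_append.mpr ⟨?_, pairwise_gt_Bu u, ?_⟩, ?_, ?_⟩
  · simp only [List.pairwise_pair]; omega
  · simp only [List.mem_cons, List.not_mem_nil, or_false, mem_Bu]
    rintro a (rfl | rfl) b hb <;> omega
  · simp only [List.pairwise_pair]; omega
  · simp only [List.mem_append, List.mem_cons, List.not_mem_nil, or_false, mem_Bu]
    rintro a ((rfl | rfl) | ha) b (rfl | rfl) <;> omega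

theorem oneRepeat_evolve3_Pu (u : ℕ) (t : ℤ) (ht₁ : 1 ≤ t) (ht₂ : t ≤ 8 * u + 4) :
    OneRepeat (evolve3 (PuA u) (Bu u) (PuC u) t) := by
  refine OneRepeat.of_perm (evolve3_Pu_perm u t).symm ?_
  obtain hα₁ | hα₂ | hγ₁ | hγ₂ :
      (t % 2 = 0 ∧ 6 * u + 2 < t ∨ t % 2 = 1 ∧ 4 * u + 3 ≤ t ∧ t ≤ 6 * u + 3) ∨
      (t % 2 = 1 ∧ t ≤ 2 * u + 1 ∨ t % 2 = 0 ∧ 2 * u < t ∧ t ≤ 4 * u + 2) ∨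
      (t % 2 = 0 ∧ t ≤ 2 * u ∨ t % 2 = 1 ∧ 2 * u + 1 < t ∧ t ≤ 4 * u + 1) ∨
      (t % 2 = 0 ∧ 4 * u + 2 < t ∧ t ≤ 6 * u + 2 ∨ t % 2 = 1 ∧ 6 * u + 3 < t) := by
    omega
  on_goal 4 => refine oneRepeat_middle_append (l₁ := [_, _, _]) (l₂ := []) ?_ (nodup_Bu u) ?_ ?_
  on_goal 3 => refine oneRepeat_middle_append (l₁ := [_, _]) (l₂ := [_]) ?_ (nodup_Bu u) ?_ ?_
  on_goal 2 => refine oneRepeat_middle_append (l₁ := [_]) (l₂ := [_, _]) ?_ (nodup_Bu u) ?_ ?_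
  on_goal 1 => refine oneRepeat_middle_append (l₁ := []) (l₂ := [_, _, _]) ?_ (nodup_Bu u) ?_ ?_
  all_goals
    simp only [List.nil_append, List.cons_append, List.nodup_cons, List.mem_cons, List.not_mem_nil,
      or_false, forall_eq_or_imp, forall_eq, mem_Bu, List.nodup_nil, not_false_eq_true, and_true]
    omega

theorem stmt15_general (u : ℕ) : IsUlrich3 (PuA u) (Bu u) (PuC u) := by
  refine ⟨List.cons_ne_nil _ _, List.cons_ne_nil _ _, strictDec_Pu u, fun t ht₁ ht₂ => ?_⟩
  rw [dim3_Pu] at ht₂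
  exact oneRepeat_evolve3_Pu u t (by exact_mod_cast ht₁) (by exact_mod_cast ht₂)

/-- For every `u ≥ 1`, the partition
`P_u = (6u+5, 2u+1 | 2u, ..., 2, -1, ..., -2u+1 | -2u-1, -6u-3)` of type `(2, 2u, 2)`
is Ulrich. -/
theorem stmt15 (u : ℕ) (hu : 1 ≤ u) : IsUlrich3 (PuA u) (Bu u) (PuC u) :=
  stmt15_general u
end

section
/- Let P = (a_1, a_2 | b_1,...,b_n | c_1, c_2) be an Ulrich partition of type (2,n,2) with a_1 - a_2 > c_1 - c_2, normalized as a_1 = y+s+r, a_2 = y, c_1 = -y, c_2 = -y-s. Then the intersection at time t = 1 is between a_2 and b_1 (i.e., b_1 = y - 1), and the last intersection (at time N) is between a_1 and b_n. -/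
lemma onerep_count (l : List ℤ) (h : OneRepeat l) :
    (∃ v, 2 ≤ l.count v) ∧ (∀ v w, 2 ≤ l.count v → 2 ≤ l.count w → v = w) ∧
      (∀ v, l.count v ≤ 2) := by
  have key : ∑ v ∈ l.toFinset, l.count v = l.toFinset.card + 1 := by
    rw [h]
    have := Multiset.toFinset_sum_count_eq (l : Multiset ℤ)
    simpa using this
  have hmem : ∀ v ∈ l.toFinset, 1 ≤ l.count v := by
    intro v hv
    exact List.count_pos_iff.mpr (List.mem_toFinset.mp hv)
  refine ⟨?_, ?_, ?_⟩
  · by_contra hc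
    push_neg at hc
    have : ∑ v ∈ l.toFinset, l.count v ≤ l.toFinset.card * 1 := by
      apply Finset.sum_le_card_nsmul
      intro x hx
      exact Nat.lt_succ_iff.mp (hc x)
    omega
  · intro v w hv hw
    by_contra hne
    have hvm : v ∈ l.toFinset := List.mem_toFinset.mpr (List.count_pos_iff.mp (by omega))
    have hwm : w ∈ (l.toFinset).erase v :=
      Finset.mem_erase.mpr ⟨Ne.symm hne, List.mem_toFinset.mpr (List.count_pos_iff.mp (by omega))⟩
    have e1 : l.count v + ∑ x ∈ l.toFinset.erase v, l.count x = ∑ x ∈ l.toFinset, l.count x :=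
      Finset.add_sum_erase _ (fun x => l.count x) hvm
    have e2 : l.count w + ∑ x ∈ (l.toFinset.erase v).erase w, l.count x
        = ∑ x ∈ l.toFinset.erase v, l.count x :=
      Finset.add_sum_erase _ (fun x => l.count x) hwm
    have e3 : ((l.toFinset.erase v).erase w).card
        ≤ ∑ x ∈ (l.toFinset.erase v).erase w, l.count x := by
      have := Finset.card_nsmul_le_sum ((l.toFinset.erase v).erase w) (fun x => l.count x) 1
        (fun x hx => hmem x (Finset.mem_of_mem_erase (Finset.mem_of_mem_erase hx)))
      simpa using this
    have c1 : ((l.toFinset.erase v).erase w).card = l.toFinset.card - 2 := by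
      rw [Finset.card_erase_of_mem hwm, Finset.card_erase_of_mem hvm]
      omega
    have c2 : 2 ≤ l.toFinset.card := by
      have := Finset.card_erase_of_mem hvm
      have hwpos : 0 < (l.toFinset.erase v).card := Finset.card_pos.mpr ⟨w, hwm⟩
      omega
    omega
  · intro v
    by_contra hc
    push_neg at hc
    have hvm : v ∈ l.toFinset := List.mem_toFinset.mpr (List.count_pos_iff.mp (by omega))
    have e1 : l.count v + ∑ x ∈ l.toFinset.erase v, l.count x = ∑ x ∈ l.toFinset, l.count x :=
      Finset.add_sum_erase _ (fun x => l.count x) hvm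
    have e3 : (l.toFinset.erase v).card ≤ ∑ x ∈ l.toFinset.erase v, l.count x := by
      have := Finset.card_nsmul_le_sum (l.toFinset.erase v) (fun x => l.count x) 1
        (fun x hx => hmem x (Finset.mem_of_mem_erase hx))
      simpa using this
    have c1 : (l.toFinset.erase v).card = l.toFinset.card - 1 := Finset.card_erase_of_mem hvm
    have c2 : 1 ≤ l.toFinset.card := Finset.card_pos.mpr ⟨v, hvm⟩
    omega

/-- Index type for the potential intersection pairs of a `(2, n, 2)` partition. -/
abbrev UPair (n : ℕ) : Type := (Fin 2 × Fin n) ⊕ (Fin n × Fin 2) ⊕ (Fin 2 × Fin 2)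

/-- `coin y s r b p t` : the pair `p` of entries coincide at time `t`. -/
def coin (y s r : ℤ) {n : ℕ} (b : Fin n → ℤ) (p : UPair n) (t : ℤ) : Prop :=
  match p with
  | .inl (i, j) => (if i = 0 then y + s + r else y) - t = b j
  | .inr (.inl (j, k)) => b j = (if k = 0 then -y else -y - s) + t
  | .inr (.inr (i, k)) => (if i = 0 then y + s + r else y) - t = (if k = 0 then -y else -y - s) + t

set_option maxHeartbeats 1600000 in
/-- Let `P = (y+s+r, y | b₁, ..., bₙ | -y, -y-s)` be an Ulrich partition of type `(2, n, 2)`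
with `a₁ - a₂ = s + r > s = c₁ - c₂` (i.e. `r > 0`).  Then the intersection at time `t = 1` is
between `a₂` and `b₁` (so `b₁ = y - 1`), and the last intersection (at time `N`) is between
`a₁` and `bₙ` (so `bₙ = y + s + r - N`). -/
theorem stmt19 (y s r : ℤ) (hr : 0 < r) (B : List ℤ) (hB : B ≠ [])
    (hU : IsUlrich3 [y + s + r, y] B [-y, -y - s]) :
    B.head? = some (y - 1) ∧
      B.getLast? = some (y + s + r - (dim3 [y + s + r, y] B [-y, -y - s] : ℤ)) := by
  obtain ⟨-, -, hDec, hOne⟩ := hU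
  have hnpos : 0 < B.length := List.length_pos_iff.mpr hB
  have hn1 : 1 ≤ (B.length : ℤ) := by exact_mod_cast hnpos
  -- ordering facts
  have hpw : List.Pairwise (· > ·) ((y+s+r) :: y :: (B ++ [-y, -y-s])) := by
    have h : List.Chain' (· > ·) ((y+s+r) :: y :: (B ++ [-y, -y-s])) := by
      simpa [StrictDec, evolve3] using hDec
    exact List.isChain_iff_pairwise.mp h
  obtain ⟨h1, hpw⟩ := List.pairwise_cons.mp hpw
  obtain ⟨h2, hpw⟩ := List.pairwise_cons.mp hpw
  rw [List.pairwise_append] at hpw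
  obtain ⟨hpwB, hpwC, hcross⟩ := hpw
  have hs1 : 0 < s := by
    have h := List.rel_of_pairwise_cons hpwC (by simp : (-y - s) ∈ [-y - s])
    omega
  have hy1 : 1 ≤ y := by
    have := h2 (-y) (by simp)
    omega
  have hb_lt : ∀ j : Fin B.length, B[(j : ℕ)] < y :=
    fun j => h2 _ (List.mem_append_left _ (List.getElem_mem j.isLt))
  have hb_gt : ∀ j : Fin B.length, -y < B[(j : ℕ)] :=
    fun j => hcross _ (List.getElem_mem j.isLt) _ (by simp)
  have hb_mono : ∀ j k : Fin B.length, j < k → B[(k : ℕ)] < B[(j : ℕ)] := by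
    have h := List.pairwise_iff_get.mp hpwB
    intro j k hj
    simpa using h j k hj
  have hnd : B.Nodup := List.Pairwise.imp ne_of_gt hpwB
  have hBc : ∀ j : Fin B.length, B.count (B[(j : ℕ)]) = 1 :=
    fun j => List.count_eq_one_of_mem hnd (List.getElem_mem j.isLt)
  have hdim : dim3 [y + s + r, y] B [-y, -y - s] = 4 * B.length + 4 := by
    simp [dim3]; ring
  set NZ : ℤ := 4 * (B.length : ℤ) + 4 with hNZ
  have hOne' : ∀ t : ℤ, 1 ≤ t → t ≤ NZ → OneRepeat (evolve3 [y+s+r, y] B [-y, -y-s] t) := by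
    intro t ht1 ht2
    have h := hOne t.toNat (by omega) (by rw [hdim]; omega)
    rwa [show ((t.toNat : ℕ) : ℤ) = t by omega] at h
  have hcount : ∀ t v : ℤ, (evolve3 [y+s+r, y] B [-y, -y-s] t).count v =
      (if y+s+r-t = v then 1 else 0) + (if y-t = v then 1 else 0) + B.count v
        + (if -y+t = v then 1 else 0) + (if -y-s+t = v then 1 else 0) := by
    intro t v
    simp [evolve3, List.count_append, List.count_cons]
    split_ifs <;> omega
  -- every time in [1, N] has a coinciding pair
  have exP : ∀ t : ℤ, 1 ≤ t → t ≤ NZ →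
      ∃ p : UPair B.length, coin y s r (fun j => B.get j) p t := by
    intro t ht1 ht2
    obtain ⟨v, hv⟩ := (onerep_count _ (hOne' t ht1 ht2)).1
    rw [hcount t v] at hv
    have hBv : B.count v ≤ 1 := List.nodup_iff_count_le_one.mp hnd v
    by_cases e1 : y+s+r-t = v <;> by_cases e2 : y-t = v <;>
      by_cases e3 : -y+t = v <;> by_cases e4 : -y-s+t = v
    · exfalso; omega
    · exfalso; omega
    · exfalso; omega
    · exfalso; omega
    · exfalso; omega
    · exact ⟨.inr (.inr (0, 0)), by simp [coin]; omega⟩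
    · exact ⟨.inr (.inr (0, 1)), by simp [coin]; omega⟩
    · rw [if_pos e1, if_neg e2, if_neg e3, if_neg e4] at hv
      obtain ⟨jn, hjn, hj⟩ := List.mem_iff_getElem.mp (List.count_pos_iff.mp (by omega : 0 < B.count v))
      exact ⟨.inl (0, ⟨jn, hjn⟩), by simp [coin]; omega⟩
    · exfalso; omega
    · exact ⟨.inr (.inr (1, 0)), by simp [coin]; omega⟩
    · exact ⟨.inr (.inr (1, 1)), by simp [coin]; omega⟩
    · rw [if_neg e1, if_pos e2, if_neg e3, if_neg e4] at hv
      obtain ⟨jn, hjn, hj⟩ := List.mem_iff_getElem.mp (List.count_pos_iff.mp (by omega : 0 < B.count v))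
      exact ⟨.inl (1, ⟨jn, hjn⟩), by simp [coin]; omega⟩
    · exfalso; omega
    · rw [if_neg e1, if_neg e2, if_pos e3, if_neg e4] at hv
      obtain ⟨jn, hjn, hj⟩ := List.mem_iff_getElem.mp (List.count_pos_iff.mp (by omega : 0 < B.count v))
      exact ⟨.inr (.inl (⟨jn, hjn⟩, 0)), by simp [coin]; omega⟩
    · rw [if_neg e1, if_neg e2, if_neg e3, if_pos e4] at hv
      obtain ⟨jn, hjn, hj⟩ := List.mem_iff_getElem.mp (List.count_pos_iff.mp (by omega : 0 < B.count v))
      exact ⟨.inr (.inl (⟨jn, hjn⟩, 1)), by simp [coin]; omega⟩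
    · exfalso
      rw [if_neg e1, if_neg e2, if_neg e3, if_neg e4] at hv
      omega
  -- every pair coincides at some time in [1, N]
  have hsurj : ∀ p : UPair B.length,
      ∃ t : ℤ, (1 ≤ t ∧ t ≤ NZ) ∧ coin y s r (fun j => B.get j) p t := by
    have hcard : Fintype.card (UPair B.length) = 4 * B.length + 4 := by simp; ring
    have hex : ∀ t : Fin (4 * B.length + 4),
        ∃ p : UPair B.length, coin y s r (fun j => B.get j) p (((t : ℕ) : ℤ) + 1) := by
      intro t
      have := t.isLt
      exact exP _ (by omega) (by push_cast; omega)
    set g : Fin (4 * B.length + 4) → UPair B.length :=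
      fun t => Classical.choose (hex t) with hg
    have hgspec : ∀ t, coin y s r (fun j => B.get j) (g t) (((t : ℕ) : ℤ) + 1) :=
      fun t => Classical.choose_spec (hex t)
    have hginj : Function.Injective g := by
      intro t1 t2 h
      have s1 := hgspec t1
      have s2 := hgspec t2
      rw [h] at s1
      have hv : ((t1 : ℕ) : ℤ) + 1 = ((t2 : ℕ) : ℤ) + 1 := by
        generalize hgen : g t2 = p at s1 s2
        rcases p with ⟨i, j⟩ | ⟨j, k⟩ | ⟨i, k⟩ <;> simp [coin] at s1 s2 <;> omega
      exact Fin.ext (by omega)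
    have hgsurj : Function.Surjective g :=
      ((Fintype.bijective_iff_injective_and_card g).mpr ⟨hginj, by simp [hcard]⟩).2
    intro p
    obtain ⟨t, ht⟩ := hgsurj p
    have := t.isLt
    refine ⟨((t : ℕ) : ℤ) + 1, ⟨by omega, by push_cast; omega⟩, ?_⟩
    rw [← ht]
    exact hgspec t
  -- interval facts for each pair
  have hab1 : ∀ j : Fin B.length, 1 ≤ y+s+r - B[(j : ℕ)] ∧ y+s+r - B[(j : ℕ)] ≤ NZ := by
    intro j
    obtain ⟨t, ⟨ht1, ht2⟩, hc⟩ := hsurj (.inl (0, j))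
    simp [coin] at hc
    omega
  have hab2 : ∀ j : Fin B.length, 1 ≤ y - B[(j : ℕ)] ∧ y - B[(j : ℕ)] ≤ NZ := by
    intro j
    obtain ⟨t, ⟨ht1, ht2⟩, hc⟩ := hsurj (.inl (1, j))
    simp [coin] at hc
    omega
  have hbc1 : ∀ j : Fin B.length, 1 ≤ B[(j : ℕ)] + y ∧ B[(j : ℕ)] + y ≤ NZ := by
    intro j
    obtain ⟨t, ⟨ht1, ht2⟩, hc⟩ := hsurj (.inr (.inl (j, 0)))
    simp [coin] at hc
    omega
  have hbc2 : ∀ j : Fin B.length, 1 ≤ B[(j : ℕ)] + y + s ∧ B[(j : ℕ)] + y + s ≤ NZ := by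
    intro j
    obtain ⟨t, ⟨ht1, ht2⟩, hc⟩ := hsurj (.inr (.inl (j, 1)))
    simp [coin] at hc
    omega
  obtain ⟨t11, ⟨ht11a, ht11b⟩, ht11⟩ := hsurj (.inr (.inr (0, 0)))
  simp [coin] at ht11
  obtain ⟨t22, ⟨ht22a, ht22b⟩, ht22⟩ := hsurj (.inr (.inr (1, 1)))
  simp [coin] at ht22
  obtain ⟨t12, ⟨ht12a, ht12b⟩, ht12⟩ := hsurj (.inr (.inr (0, 1)))
  simp [coin] at ht12
  obtain ⟨t21, ⟨ht21a, ht21b⟩, ht21⟩ := hsurj (.inr (.inr (1, 0)))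
  simp [coin] at ht21
  have hlpos : B.length - 1 < B.length := by omega
  -- j ≠ 0 implies strictly smaller than b 0 ; j ≠ last implies strictly bigger than b last
  have hne0 : ∀ j : Fin B.length, (j : ℕ) ≠ 0 → B[(j : ℕ)] < B[0] := by
    intro j hj
    have := hb_mono ⟨0, hnpos⟩ j (by rw [Fin.lt_def]; simpa using Nat.pos_of_ne_zero hj)
    simpa using this
  have hnelast : ∀ j : Fin B.length, (j : ℕ) ≠ B.length - 1 → B[B.length - 1] < B[(j : ℕ)] := by
    intro j hj
    have hlt := j.isLt
    have := hb_mono j ⟨B.length - 1, hlpos⟩ (by rw [Fin.lt_def]; simp; omega)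
    simpa using this
  -- canonical facts at the endpoints
  have hb0lt : B[0] < y := by simpa using hb_lt ⟨0, hnpos⟩
  have hb0gt : -y < B[0] := by simpa using hb_gt ⟨0, hnpos⟩
  have hblastlt : B[B.length - 1] < y := by simpa using hb_lt ⟨B.length - 1, hlpos⟩
  have hblastgt : -y < B[B.length - 1] := by simpa using hb_gt ⟨B.length - 1, hlpos⟩
  have hab1z : 1 ≤ y+s+r - B[0] ∧ y+s+r - B[0] ≤ NZ := by simpa using hab1 ⟨0, hnpos⟩
  have hab2z : 1 ≤ y - B[0] ∧ y - B[0] ≤ NZ := by simpa using hab2 ⟨0, hnpos⟩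
  have hbc1z : 1 ≤ B[0] + y ∧ B[0] + y ≤ NZ := by simpa using hbc1 ⟨0, hnpos⟩
  have hbc2z : 1 ≤ B[0] + y + s ∧ B[0] + y + s ≤ NZ := by simpa using hbc2 ⟨0, hnpos⟩
  have hab1l : 1 ≤ y+s+r - B[B.length - 1] ∧ y+s+r - B[B.length - 1] ≤ NZ := by
    simpa using hab1 ⟨B.length - 1, hlpos⟩
  have hbc1l : 1 ≤ B[B.length - 1] + y ∧ B[B.length - 1] + y ≤ NZ := by
    simpa using hbc1 ⟨B.length - 1, hlpos⟩
  have hBcz : B.count (B[0]) = 1 := by simpa using hBc ⟨0, hnpos⟩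
  have hBcl : B.count (B[B.length - 1]) = 1 := by simpa using hBc ⟨B.length - 1, hlpos⟩
  have le2N : ∀ v, (evolve3 [y+s+r, y] B [-y, -y-s] NZ).count v ≤ 2 :=
    (onerep_count _ (hOne' NZ (by omega) (by omega))).2.2
  have le21 : ∀ v, (evolve3 [y+s+r, y] B [-y, -y-s] 1).count v ≤ 2 :=
    (onerep_count _ (hOne' 1 (by omega) (by omega))).2.2
  have uniq1 := (onerep_count _ (hOne' 1 (by omega) (by omega))).2.1
  -- the intersection at time 1 is between a₂ and b₁
  have hb0 : B[0] = y - 1 := by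
    obtain ⟨p, hp⟩ := exP 1 (by omega) (by omega)
    rcases p with ⟨i, j⟩ | ⟨j, k⟩ | ⟨i, k⟩
    · fin_cases i <;> simp [coin] at hp
      · -- a₁ meets b j at time 1 : impossible
        have := hb_lt j
        omega
      · -- a₂ meets b j at time 1 : j = 0
        by_cases hj : (j : ℕ) = 0
        · simp only [hj] at hp
          omega
        · have := hne0 j hj
          omega
    · fin_cases k <;> simp [coin] at hp
      · -- b j meets c₁ at time 1 : then j = last, leading to a contradiction at time N
        have hjl : (j : ℕ) = B.length - 1 := by
          by_contra hj
          have := hnelast j hj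
          omega
        simp only [hjl] at hp
        exfalso
        obtain ⟨q, hq⟩ := exP NZ (by omega) (by omega)
        rcases q with ⟨i', j'⟩ | ⟨j', k'⟩ | ⟨i', k'⟩
        · fin_cases i' <;> simp [coin] at hq
          · have hj'l : (j' : ℕ) = B.length - 1 := by
              by_contra hj'
              have := hnelast j' hj'
              have := hab1l
              omega
            simp only [hj'l] at hq
            omega
          · have := hab1 j'
            omega
        · fin_cases k' <;> simp [coin] at hq
          · have := hbc2 j'
            omega
          · have hj'0 : (j' : ℕ) = 0 := by
              by_contra hj'
              have := hne0 j' hj'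
              have := hbc2z
              omega
            simp only [hj'0] at hq
            have hne1 : y - B[0] ≠ 1 := by
              intro h1
              by_cases hc0 : B[0] = B[B.length - 1]
              · have d := le21 (B[0])
                rw [hcount] at d
                split_ifs at d <;> omega
              · have d1 : 2 ≤ (evolve3 [y+s+r, y] B [-y, -y-s] 1).count (B[0]) := by
                  rw [hcount]
                  split_ifs <;> omega
                have d2 : 2 ≤ (evolve3 [y+s+r, y] B [-y, -y-s] 1).count (B[B.length - 1]) := by
                  rw [hcount]
                  split_ifs <;> omega
                exact hc0 (uniq1 _ _ d1 d2)
            have := hab2z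
            have := hab1l
            omega
        · fin_cases i' <;> fin_cases k' <;> simp [coin] at hq
          · have := hab1l
            omega
          · have hforce : B[0] = y + s + r - NZ := by
              have := hab1z
              have := hbc2z
              omega
            have d := le2N (B[0])
            rw [hcount] at d
            split_ifs at d <;> omega
          · have := hab1l
            omega
          · have := hab1l
            omega
      · -- b j meets c₂ at time 1 : impossible
        have := hb_gt j
        omega
    · fin_cases i <;> fin_cases k <;> simp [coin] at hp <;> omega
  -- the intersection at time N is between a₁ and bₙ
  have hblast : B[B.length - 1] = y + s + r - NZ := by
    obtain ⟨q, hq⟩ := exP NZ (by omega) (by omega)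
    rcases q with ⟨i', j'⟩ | ⟨j', k'⟩ | ⟨i', k'⟩
    · fin_cases i' <;> simp [coin] at hq
      · by_cases hj' : (j' : ℕ) = B.length - 1
        · simp only [hj'] at hq
          omega
        · have := hnelast j' hj'
          have := hab1l
          omega
      · have := hab1 j'
        omega
    · fin_cases k' <;> simp [coin] at hq
      · have := hbc2 j'
        omega
      · have hj'0 : (j' : ℕ) = 0 := by
          by_contra hj'
          have := hne0 j' hj'
          have := hbc2z
          omega
        simp only [hj'0] at hq
        omega
    · fin_cases i' <;> fin_cases k' <;> simp [coin] at hq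
      · have := hab1l
        have := hbc1l
        omega
      · have := hab1l
        have := hbc1l
        have := hbc2z
        omega
      · have := hbc2z
        omega
      · have := hbc2z
        omega
  constructor
  · rw [List.head?_eq_head hB, List.head_eq_getElem]
    exact congrArg some hb0
  · rw [List.getLast?_eq_getLast_of_ne_nil hB, List.getLast_eq_getElem]
    refine congrArg some ?_
    have hcast : ((dim3 [y + s + r, y] B [-y, -y - s] : ℕ) : ℤ) = NZ := by
      rw [hdim]
      push_cast
      omega
    rw [hcast]
    exact hblast
end
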